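/- arXiv:1810.07288 — 8 statements merged into one kernel-verified Lean document; each statement's English description precedes it below -/
import Mathlib

section
/- If f has finite-sum structure f(w) = (1/n) Σᵢ fᵢ(w), each fᵢ is convex and Lᵢ-smooth with Lᵢ ≤ L_max, and the model interpolates the data (i.e., ∇fᵢ(w*) = 0 for all i at the minimizer w* of f), then for all w: E_i ‖∇fᵢ(w)‖² ≤ 2 L_max [f(w) − f(w*)]. -/
/-!
A `K`-Lipschitz gradient gives, by monotonicity along the segment, the descent lemma
`g y ≤ g x + ⟪∇g x, y - x⟫ + K/2 ‖y - x‖²`. At the gradient step `y = w - K⁻¹ ∇g w` this reads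
`g y ≤ g w - ‖∇g w‖² / (2K)`, and a critical point `xs` of the convex `g` is a global minimiser,
so `‖∇g w‖² ≤ 2K (g w - g xs)`. Interpolation makes `w*` such a point for every `fᵢ`; averaging
the per-summand bounds over `i` gives the claim.
-/

open scoped RealInnerProductSpace
open Finset AffineMap

section

variable {E : Type*} [NormedAddCommGroup E] [InnerProductSpace ℝ E] [CompleteSpace E]
  {g : E → ℝ} {g' : E → E}

theorem HasGradientAt.hasDerivAt_comp_lineMap {x y : E} {t : ℝ} {v : E}
    (hg : HasGradientAt g v (lineMap x y t)) :
    HasDerivAt (fun s : ℝ => g (lineMap x y s)) ⟪v, y - x⟫ t := by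
  simpa [Function.comp_def] using hg.hasFDerivAt.comp_hasDerivAt t hasDerivAt_lineMap

theorem ConvexOn.add_inner_le_of_hasGradientAt {s : Set E} (hconv : ConvexOn ℝ s g)
    {x y : E} (hx : x ∈ s) (hy : y ∈ s) {v : E} (hg : HasGradientAt g v x) :
    g x + ⟪v, y - x⟫ ≤ g y := by
  have hφ := hconv.comp_affineMap (lineMap x y : ℝ →ᵃ[ℝ] E)
  have hderiv : HasDerivAt (fun t : ℝ => g (lineMap x y t)) ⟪v, y - x⟫ 0 :=
    HasGradientAt.hasDerivAt_comp_lineMap (by simpa using hg)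
  have := hφ.le_slope_of_hasDerivAt (x := 0) (y := 1) (by simpa) (by simpa) one_pos hderiv
  simp only [slope_def_field, Function.comp_apply, lineMap_apply_one, lineMap_apply_zero,
    sub_zero, div_one] at this
  linarith

theorem le_add_inner_add_of_lipschitzWith_gradient {K : NNReal}
    (hg : ∀ x, HasGradientAt g (g' x) x) (hK : LipschitzWith K g') (x y : E) :
    g y ≤ g x + ⟪g' x, y - x⟫ + K / 2 * ‖y - x‖ ^ 2 := by
  set ψ : ℝ → ℝ := fun t => g (lineMap x y t) - t * ⟪g' x, y - x⟫ - K / 2 * t ^ 2 * ‖y - x‖ ^ 2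
  have hψ : ∀ t, HasDerivAt ψ (⟪g' (lineMap x y t) - g' x, y - x⟫ - K * t * ‖y - x‖ ^ 2) t := by
    intro t
    have h := (((hg _).hasDerivAt_comp_lineMap (x := x) (y := y) (t := t)).fun_sub
      ((hasDerivAt_id' t).mul_const ⟪g' x, y - x⟫)).fun_sub
      (((hasDerivAt_pow 2 t).const_mul (K / 2 : ℝ)).mul_const (‖y - x‖ ^ 2))
    refine h.congr_deriv ?_
    rw [inner_sub_left]
    ring
  have hψ' : ∀ t ∈ interior (Set.Ici (0 : ℝ)),
      ⟪g' (lineMap x y t) - g' x, y - x⟫ - K * t * ‖y - x‖ ^ 2 ≤ 0 := by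
    intro t ht
    rw [interior_Ici, Set.mem_Ioi] at ht
    rw [sub_nonpos]
    have hlip : ‖g' (lineMap x y t) - g' x‖ ≤ K * (t * ‖y - x‖) := by
      simpa [← dist_eq_norm, dist_lineMap_left, abs_of_pos ht, dist_comm y x]
        using hK.dist_le_mul (lineMap x y t) x
    calc ⟪g' (lineMap x y t) - g' x, y - x⟫ ≤ ‖g' (lineMap x y t) - g' x‖ * ‖y - x‖ :=
          real_inner_le_norm _ _
      _ ≤ K * (t * ‖y - x‖) * ‖y - x‖ := by gcongr
      _ = K * t * ‖y - x‖ ^ 2 := by ring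
  have hanti : AntitoneOn ψ (Set.Ici 0) :=
    antitoneOn_of_hasDerivWithinAt_nonpos (convex_Ici 0)
      (fun t _ => (hψ t).continuousAt.continuousWithinAt)
      (fun t _ => (hψ t).hasDerivWithinAt) hψ'
  have := hanti (Set.self_mem_Ici) (Set.mem_Ici.2 zero_le_one) zero_le_one
  simp only [ψ, lineMap_apply_one, lineMap_apply_zero, one_pow, zero_pow two_ne_zero] at this
  linarith

theorem sq_norm_gradient_le_of_lipschitzWith {K : NNReal} (hconv : ConvexOn ℝ Set.univ g)
    (hg : ∀ x, HasGradientAt g (g' x) x) (hK : LipschitzWith K g') {xs : E} (h0 : g' xs = 0)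
    (w : E) : ‖g' w‖ ^ 2 ≤ 2 * K * (g w - g xs) := by
  rcases eq_or_ne K 0 with rfl | hK0
  · simp [(LipschitzWith.zero_iff g').1 hK w xs, h0]
  have hKpos : (0 : ℝ) < K := by positivity
  set y := w - (K : ℝ)⁻¹ • g' w
  have hmin : g xs ≤ g y := by
    simpa [h0] using hconv.add_inner_le_of_hasGradientAt trivial trivial (hg xs) (y := y)
  have hdesc := le_add_inner_add_of_lipschitzWith_gradient hg hK w y
  have hstep : y - w = -((K : ℝ)⁻¹ • g' w) := by simp [y]
  rw [hstep, inner_neg_right, real_inner_smul_right, real_inner_self_eq_norm_sq, norm_neg,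
    norm_smul, Real.norm_eq_abs, abs_inv, abs_of_pos hKpos] at hdesc
  have hdecrease : ‖g' w‖ ^ 2 / (2 * K) ≤ g w - g xs := by
    have : (K : ℝ) / 2 * ((K : ℝ)⁻¹ * ‖g' w‖) ^ 2 = ‖g' w‖ ^ 2 / (2 * K) := by
      field_simp
    have : (K : ℝ)⁻¹ * ‖g' w‖ ^ 2 = 2 * (‖g' w‖ ^ 2 / (2 * K)) := by
      field_simp
    linarith
  rwa [div_le_iff₀ (by positivity), mul_comm] at hdecrease

theorem sq_norm_gradient_le_of_lipschitzWith_toNNReal {L M : ℝ} (hconv : ConvexOn ℝ Set.univ g)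
    (hg : ∀ x, HasGradientAt g (g' x) x) (hL : LipschitzWith L.toNNReal g') (hLM : L ≤ M)
    {xs : E} (h0 : g' xs = 0) (w : E) : ‖g' w‖ ^ 2 ≤ 2 * M * (g w - g xs) := by
  have hgap : g xs ≤ g w := by
    simpa [h0] using hconv.add_inner_le_of_hasGradientAt trivial trivial (hg xs) (y := w)
  rcases le_or_gt 0 M with hM | hM
  · calc ‖g' w‖ ^ 2 ≤ 2 * L.toNNReal * (g w - g xs) :=
          sq_norm_gradient_le_of_lipschitzWith hconv hg hL h0 w
      _ ≤ 2 * M * (g w - g xs) := by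
          gcongr
          rw [Real.coe_toNNReal']
          exact max_le hLM hM
  · rw [Real.toNNReal_of_nonpos (by linarith), LipschitzWith.zero_iff] at hL
    have hflat : ∀ x, g' x = 0 := fun x => (hL x xs).trans h0
    have : g w ≤ g xs := by
      simpa [hflat w] using hconv.add_inner_le_of_hasGradientAt trivial trivial (hg w) (y := xs)
    simp [hflat w, le_antisymm this hgap]

end

theorem finite_sum_weak_growth_general
    (d n : ℕ)
    (f : EuclideanSpace ℝ (Fin d) → ℝ)
    (fi : Fin n → EuclideanSpace ℝ (Fin d) → ℝ)
    (fi' : Fin n → EuclideanSpace ℝ (Fin d) → EuclideanSpace ℝ (Fin d))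
    (Li : Fin n → ℝ) (Lmax : ℝ)
    (wstar : EuclideanSpace ℝ (Fin d))
    (hf : ∀ w, f w = (1 / (n : ℝ)) * ∑ i, fi i w)
    (hconv : ∀ i, ConvexOn ℝ Set.univ (fi i))
    (hgrad : ∀ i w, HasGradientAt (fi i) (fi' i w) w)
    (hlip : ∀ i, LipschitzWith (Real.toNNReal (Li i)) (fi' i))
    (hLmax : ∀ i, Li i ≤ Lmax)
    (hinterp : ∀ i, fi' i wstar = 0) :
    ∀ w, (1 / (n : ℝ)) * ∑ i, ‖fi' i w‖ ^ 2 ≤ 2 * Lmax * (f w - f wstar) := by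
  intro w
  have hsum : ∑ i, ‖fi' i w‖ ^ 2 ≤ ∑ i, 2 * Lmax * (fi i w - fi i wstar) :=
    sum_le_sum fun i _ => sq_norm_gradient_le_of_lipschitzWith_toNNReal (hconv i) (hgrad i) (hlip i)
      (hLmax i) (hinterp i) w
  calc (1 / (n : ℝ)) * ∑ i, ‖fi' i w‖ ^ 2
      ≤ (1 / (n : ℝ)) * ∑ i, 2 * Lmax * (fi i w - fi i wstar) := by gcongr
    _ = 2 * Lmax * (f w - f wstar) := by
      rw [hf w, hf wstar, ← mul_sum, sum_sub_distrib]
      ring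

/-- For a finite-sum convex smooth objective under interpolation,
the expected squared norm of stochastic gradients satisfies the weak growth bound
`E_i ‖∇f_i(w)‖² ≤ 2 L_max [f(w) − f(w*)]`. -/
theorem finite_sum_weak_growth
    (d n : ℕ) (hn : 0 < n)
    (f : EuclideanSpace ℝ (Fin d) → ℝ)
    (fi : Fin n → EuclideanSpace ℝ (Fin d) → ℝ)
    (fi' : Fin n → EuclideanSpace ℝ (Fin d) → EuclideanSpace ℝ (Fin d))
    (Li : Fin n → ℝ) (Lmax : ℝ)
    (wstar : EuclideanSpace ℝ (Fin d))
    (hf : ∀ w, f w = (1 / (n : ℝ)) * ∑ i, fi i w)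
    (hconv : ∀ i, ConvexOn ℝ Set.univ (fi i))
    (hgrad : ∀ i w, HasGradientAt (fi i) (fi' i w) w)
    (hlip : ∀ i, LipschitzWith (Real.toNNReal (Li i)) (fi' i))
    (hLmax : ∀ i, Li i ≤ Lmax)
    (hmin : ∀ w, f wstar ≤ f w)
    (hinterp : ∀ i, fi' i wstar = 0) :
    ∀ w, (1 / (n : ℝ)) * ∑ i, ‖fi' i w‖ ^ 2 ≤ 2 * Lmax * (f w - f wstar) :=
  finite_sum_weak_growth_general d n f fi fi' Li Lmax wstar hf hconv hgrad hlip hLmax hinterp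
end

section
/- If f is convex with L-Lipschitz gradient and w* minimizes f, and the stochastic gradients satisfy the strong growth condition E_z‖∇f(w,z)‖² ≤ ρ‖∇f(w)‖², then f satisfies the weak growth condition E_z‖∇f(w,z)‖² ≤ 2ρL[f(w) − f(w*)]. -/
/-!
The descent lemma for a gradient that is `L`-Lipschitz, applied at the gradient step
`w - L⁻¹ ∇f(w)`, gives `f(w*) ≤ f(w) - ‖∇f(w)‖² / (2L)`, i.e. `‖∇f(w)‖² ≤ 2L [f(w) - f(w*)]`;
multiplying by `ρ ≥ 0` turns the strong growth condition into the weak one. If `ρ < 0` or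
`L ≤ 0`, the hypotheses force `∇f ≡ 0`, so `f` is constant and the claim is trivial.
-/

open scoped RealInnerProductSpace NNReal

section Gradient

variable {E : Type*} [NormedAddCommGroup E] [InnerProductSpace ℝ E] [CompleteSpace E]
  {f : E → ℝ}

theorem HasGradientAt.hasDerivAt_comp_add_smul {g x v : E} {t : ℝ}
    (h : HasGradientAt f g (x + t • v)) :
    HasDerivAt (fun s : ℝ => f (x + s • v)) ⟪g, v⟫ t := by
  have hline : HasDerivAt (fun s : ℝ => x + s • v) v t := by
    simpa using ((hasDerivAt_id t).smul_const v).const_add x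
  have := (hasGradientAt_iff_hasFDerivAt.mp h).comp_hasDerivAt t hline
  simp only [InnerProductSpace.toDual_apply_apply] at this
  exact this

theorem IsLocalMin.hasGradientAt_eq_zero {g a : E} (h : IsLocalMin f a)
    (hf : HasGradientAt f g a) : g = 0 := by
  simpa using h.hasFDerivAt_eq_zero (hasGradientAt_iff_hasFDerivAt.mp hf)

theorem is_const_of_hasGradientAt_zero (hf : ∀ x, HasGradientAt f 0 x) (x y : E) :
    f x = f y :=
  is_const_of_fderiv_eq_zero (fun z => (hf z).differentiableAt)
    (fun z => by simpa using (hasGradientAt_iff_hasFDerivAt.mp (hf z)).fderiv) x y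

variable {f' : E → E} {K : ℝ≥0}

theorem apply_add_le_of_lipschitzWith_gradient (hf : ∀ x, HasGradientAt f (f' x) x)
    (hK : LipschitzWith K f') (x v : E) :
    f (x + v) ≤ f x + ⟪f' x, v⟫ + K / 2 * ‖v‖ ^ 2 := by
  set φ : ℝ → ℝ := fun t => f (x + t • v) - t * ⟪f' x, v⟫ - K / 2 * t ^ 2 * ‖v‖ ^ 2
  have hφ : ∀ t, HasDerivAt φ (⟪f' (x + t • v) - f' x, v⟫ - K * t * ‖v‖ ^ 2) t := by
    intro t
    have := (((hf (x + t • v)).hasDerivAt_comp_add_smul (x := x) (v := v)).sub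
      ((hasDerivAt_id t).mul_const ⟪f' x, v⟫)).sub
      (((hasDerivAt_pow 2 t).const_mul (K / 2 : ℝ)).mul_const (‖v‖ ^ 2))
    refine this.congr_deriv ?_
    rw [inner_sub_left]
    push_cast
    ring
  have hφ_nonpos : ∀ t ∈ interior (Set.Ici (0 : ℝ)),
      ⟪f' (x + t • v) - f' x, v⟫ - K * t * ‖v‖ ^ 2 ≤ 0 := by
    intro t ht
    rw [interior_Ici, Set.mem_Ioi] at ht
    have hlip : ‖f' (x + t • v) - f' x‖ ≤ K * (t * ‖v‖) := by
      simpa [← dist_eq_norm, norm_smul, abs_of_pos ht] using hK.dist_le_mul (x + t • v) x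
    have := calc
      ⟪f' (x + t • v) - f' x, v⟫ ≤ ‖f' (x + t • v) - f' x‖ * ‖v‖ := real_inner_le_norm _ _
      _ ≤ K * (t * ‖v‖) * ‖v‖ := by gcongr
      _ = K * t * ‖v‖ ^ 2 := by ring
    linarith
  have hanti := antitoneOn_of_hasDerivWithinAt_nonpos (convex_Ici 0)
    (fun t _ => (hφ t).continuousAt.continuousWithinAt)
    (fun t _ => (hφ t).hasDerivWithinAt) hφ_nonpos
  have := hanti (Set.mem_Ici.mpr le_rfl) (Set.mem_Ici.mpr zero_le_one) zero_le_one
  simp only [φ, zero_smul, add_zero, zero_mul, one_smul, one_mul, one_pow] at this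
  linarith

theorem sq_norm_gradient_le_of_lipschitzWith_s2 (hf : ∀ x, HasGradientAt f (f' x) x)
    (hK : LipschitzWith K f') {xmin : E} (hmin : ∀ x, f xmin ≤ f x) (x : E) :
    ‖f' x‖ ^ 2 ≤ 2 * K * (f x - f xmin) := by
  rcases eq_or_ne K 0 with rfl | hK0
  · have hcrit : f' xmin = 0 :=
      IsLocalMin.hasGradientAt_eq_zero (Filter.Eventually.of_forall hmin) (hf xmin)
    have : f' x = f' xmin := by simpa using hK.dist_le_mul x xmin
    simp [this, hcrit]
  · have hKpos : (0 : ℝ) < K := by positivity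
    have hstep := apply_add_le_of_lipschitzWith_gradient hf hK x (-((K : ℝ)⁻¹ • f' x))
    rw [inner_neg_right, real_inner_smul_right, real_inner_self_eq_norm_sq, norm_neg,
      norm_smul, Real.norm_of_nonneg (inv_nonneg.mpr hKpos.le)] at hstep
    have hdecrease : f xmin ≤ f x - ‖f' x‖ ^ 2 / (2 * K) := calc
      f xmin ≤ f (x + -((K : ℝ)⁻¹ • f' x)) := hmin _
      _ ≤ f x + -((K : ℝ)⁻¹ * ‖f' x‖ ^ 2) + K / 2 * ((K : ℝ)⁻¹ * ‖f' x‖) ^ 2 := hstep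
      _ = f x - ‖f' x‖ ^ 2 / (2 * K) := by field_simp; ring
    rw [le_sub_comm, div_le_iff₀ (by positivity)] at hdecrease
    linarith

end Gradient

theorem sgc_implies_wgc_general
    (d n : ℕ)
    (f : EuclideanSpace ℝ (Fin d) → ℝ)
    (f' : EuclideanSpace ℝ (Fin d) → EuclideanSpace ℝ (Fin d))
    (G : EuclideanSpace ℝ (Fin d) → Fin n → EuclideanSpace ℝ (Fin d))
    (ρ L : ℝ) (wstar : EuclideanSpace ℝ (Fin d))
    (hgrad : ∀ w, HasGradientAt f (f' w) w)
    (hlip : LipschitzWith (Real.toNNReal L) f')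
    (hmin : ∀ w, f wstar ≤ f w)
    (hsgc : ∀ w, (1 / (n : ℝ)) * ∑ z, ‖G w z‖ ^ 2 ≤ ρ * ‖f' w‖ ^ 2) :
    ∀ w, (1 / (n : ℝ)) * ∑ z, ‖G w z‖ ^ 2 ≤ 2 * ρ * L * (f w - f wstar) := by
  intro w
  by_cases hzero : ∀ v, f' v = 0
  · have hconst : f w = f wstar :=
      is_const_of_hasGradientAt_zero (fun v => hzero v ▸ hgrad v) w wstar
    simpa [hzero w, hconst] using hsgc w
  obtain ⟨v, hv⟩ := not_forall.mp hzero
  have hco := sq_norm_gradient_le_of_lipschitzWith_s2 hgrad hlip hmin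
  have hv_pos : 0 < ‖f' v‖ ^ 2 := pow_pos (norm_pos_iff.mpr hv) 2
  have hρ : 0 ≤ ρ := by
    have hmean : 0 ≤ (1 / (n : ℝ)) * ∑ z, ‖G v z‖ ^ 2 :=
      mul_nonneg (by positivity) (Finset.sum_nonneg fun z _ => sq_nonneg _)
    exact nonneg_of_mul_nonneg_left (hmean.trans (hsgc v)) hv_pos
  have hL : 0 ≤ L := by
    by_contra! hL
    have := hco v
    rw [Real.toNNReal_of_nonpos hL.le, NNReal.coe_zero, mul_zero, zero_mul] at this
    linarith
  calc (1 / (n : ℝ)) * ∑ z, ‖G w z‖ ^ 2 ≤ ρ * ‖f' w‖ ^ 2 := hsgc w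
    _ ≤ ρ * (2 * L * (f w - f wstar)) := by
        gcongr
        simpa [Real.coe_toNNReal L hL] using hco w
    _ = 2 * ρ * L * (f w - f wstar) := by ring

/-- For a convex `L`-smooth function, the strong growth condition
implies the weak growth condition with the same constant `ρ`. -/
theorem sgc_implies_wgc
    (d n : ℕ) (hn : 0 < n)
    (f : EuclideanSpace ℝ (Fin d) → ℝ)
    (f' : EuclideanSpace ℝ (Fin d) → EuclideanSpace ℝ (Fin d))
    (G : EuclideanSpace ℝ (Fin d) → Fin n → EuclideanSpace ℝ (Fin d))
    (ρ L : ℝ) (wstar : EuclideanSpace ℝ (Fin d))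
    (hgrad : ∀ w, HasGradientAt f (f' w) w)
    (hconv : ConvexOn ℝ Set.univ f)
    (hlip : LipschitzWith (Real.toNNReal L) f')
    (hmin : ∀ w, f wstar ≤ f w)
    (hunbiased : ∀ w, (1 / (n : ℝ)) • ∑ z, G w z = f' w)
    (hsgc : ∀ w, (1 / (n : ℝ)) * ∑ z, ‖G w z‖ ^ 2 ≤ ρ * ‖f' w‖ ^ 2) :
    ∀ w, (1 / (n : ℝ)) * ∑ z, ‖G w z‖ ^ 2 ≤ 2 * ρ * L * (f w - f wstar) :=
  sgc_implies_wgc_general d n f f' G ρ L wstar hgrad hlip hmin hsgc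
end

section
/- Suppose the data a = y·x is supported on a finite set of κ points (uniform distribution), is linearly separable with margin τ (there exists w* with ‖w*‖ = 1/τ and aᵀw* ≥ 1 for all a in the support), and ‖a‖ ≤ 1. Then the squared-hinge loss f(w) = E[(1 − aᵀw)₊²] satisfies the strong growth condition E‖∇f(w,a)‖² ≤ (κ/τ²)‖∇f(w)‖², where ∇f(w,a) = −2(1 − aᵀw)₊ a. -/
open scoped RealInnerProductSpace
open Finset

/-- For linearly separable data with margin `τ`, supported
uniformly on `κ` points with `‖a‖ ≤ 1`, the squared-hinge loss satisfies
the strong growth condition with constant `κ/τ²`. -/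
theorem squared_hinge_sgc
    (d κ : ℕ) (hκ : 0 < κ)
    (a : Fin κ → EuclideanSpace ℝ (Fin d))
    (τ : ℝ) (hτ : 0 < τ)
    (wstar : EuclideanSpace ℝ (Fin d))
    (hmargin : ∀ i, 1 ≤ ⟪a i, wstar⟫)
    (hwstar : ‖wstar‖ = 1 / τ)
    (hnorm : ∀ i, ‖a i‖ ≤ 1) :
    ∀ w, (1 / (κ : ℝ)) * ∑ i, ‖(-(2 * max (1 - ⟪a i, w⟫) 0)) • a i‖ ^ 2
      ≤ ((κ : ℝ) / τ ^ 2) *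
        ‖(1 / (κ : ℝ)) • ∑ i, (-(2 * max (1 - ⟪a i, w⟫) 0)) • a i‖ ^ 2 := by
  intro w
  set c : Fin κ → ℝ := fun i => 2 * max (1 - ⟪a i, w⟫) 0 with hc
  have hcnn : ∀ i, 0 ≤ c i := fun i => by positivity
  set g : EuclideanSpace ℝ (Fin d) := ∑ i, (-(c i)) • a i with hg
  set S : ℝ := ∑ i, c i with hS
  have hSnn : 0 ≤ S := Finset.sum_nonneg fun i _ => hcnn i
  have hκR : (0:ℝ) < κ := Nat.cast_pos.mpr hκ
  -- step 1: S ≤ ⟪-g, wstar⟫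
  have h1 : S ≤ ⟪-g, wstar⟫ := by
    have hng : -g = ∑ i, c i • a i := by
      rw [hg, ← Finset.sum_neg_distrib]
      exact Finset.sum_congr rfl fun i _ => by rw [neg_smul, neg_neg]
    rw [hng, sum_inner, hS]
    refine Finset.sum_le_sum fun i _ => ?_
    rw [real_inner_smul_left]
    calc c i = c i * 1 := (mul_one _).symm
    _ ≤ c i * ⟪a i, wstar⟫ := by
        exact mul_le_mul_of_nonneg_left (hmargin i) (hcnn i)
  -- step 2: τ * S ≤ ‖g‖
  have h2 : τ * S ≤ ‖g‖ := by
    have hcs : ⟪-g, wstar⟫ ≤ ‖g‖ * (1/τ) := by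
      calc ⟪-g, wstar⟫ ≤ ‖-g‖ * ‖wstar‖ := real_inner_le_norm _ _
      _ = ‖g‖ * (1/τ) := by rw [norm_neg, hwstar]
    have h := h1.trans hcs
    calc τ * S ≤ τ * (‖g‖ * (1/τ)) := mul_le_mul_of_nonneg_left h hτ.le
    _ = ‖g‖ := by field_simp
  have h2sq : τ^2 * S^2 ≤ ‖g‖^2 := by
    have := mul_self_le_mul_self (by positivity) h2
    nlinarith
  -- step 3: ∑ (c i)^2 ≤ S^2
  have h3 : ∑ i, (c i)^2 ≤ S^2 := by
    rw [hS]
    simpa [sq] using Finset.sum_sq_le_sq_sum_of_nonneg (s := Finset.univ)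
      (f := c) (fun i _ => hcnn i)
  -- step 4: each term
  have h4 : ∑ i, ‖(-(c i)) • a i‖^2 ≤ ∑ i, (c i)^2 := by
    refine Finset.sum_le_sum fun i _ => ?_
    rw [norm_smul]
    have : ‖(-(c i) : ℝ)‖ = c i := by
      rw [norm_neg, Real.norm_of_nonneg (hcnn i)]
    rw [this, mul_pow]
    have hai : ‖a i‖^2 ≤ 1 := by
      have := hnorm i
      nlinarith [norm_nonneg (a i)]
    nlinarith [sq_nonneg (c i)]
  -- assemble
  have hrhs : ‖(1 / (κ : ℝ)) • g‖^2 = (1/(κ:ℝ))^2 * ‖g‖^2 := by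
    rw [norm_smul, mul_pow]
    congr 1
    rw [Real.norm_of_nonneg (by positivity)]
  rw [hrhs]
  have key : ∑ i, ‖(-(c i)) • a i‖^2 ≤ ((κ:ℝ)/τ^2) * (1/(κ:ℝ)) * ‖g‖^2 := by
    have : ((κ:ℝ)/τ^2) * (1/(κ:ℝ)) * ‖g‖^2 = ‖g‖^2 / τ^2 := by
      field_simp
    rw [this]
    calc ∑ i, ‖(-(c i)) • a i‖^2 ≤ S^2 := h4.trans h3
    _ ≤ ‖g‖^2 / τ^2 := by
        rw [le_div_iff₀ (by positivity)]
        nlinarith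
  calc (1 / (κ : ℝ)) * ∑ i, ‖(-(c i)) • a i‖ ^ 2
      ≤ (1 / (κ : ℝ)) * (((κ:ℝ)/τ^2) * (1/(κ:ℝ)) * ‖g‖^2) := by
        exact mul_le_mul_of_nonneg_left key (by positivity)
    _ = ((κ : ℝ) / τ ^ 2) * ((1/(κ:ℝ))^2 * ‖g‖^2) := by ring
end

section
/- (Linear rate under PL and SGC) If f is L-smooth, satisfies the PL inequality ‖∇f(w)‖² ≥ 2μ[f(w) − f*], and its stochastic gradients satisfy the strong growth condition E_z‖∇f(w,z)‖² ≤ ρ‖∇f(w)‖², then SGD with constant step-size η = 1/(ρL) satisfies E[f(w_{k+1}) − f*] ≤ (1 − μ/(ρL))^{k+1} [f(w₀) − f*]. -/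
/-!
The descent lemma for an `L`-Lipschitz gradient bounds one SGD step from `w`, averaged over the
noise `z`, by `f w - η ‖∇f w‖² + L η² / 2 · 𝔼‖∇f(w, z)‖²`. Unbiasedness, the strong growth
condition and `η = 1 / (ρ L)` turn this into `f w - η / 2 · ‖∇f w‖²`, and the PL inequality into
`f* + (1 - μ / (ρ L)) (f w - f*)`. Since `W_k` depends only on the first `k` noise values,
averaging over the `(k+1)`-st one applies this step bound inside the expectation, so
`e_k = 𝔼 f(W_k) - f*` satisfies `e_{k+1} ≤ (1 - μ / (ρ L)) e_k`.
-/

open scoped RealInnerProductSpace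
open Finset

/-- Expectation over the first `k` steps of uniform i.i.d. noise in `Fin n`. -/
noncomputable def ExpN (n k : ℕ) (hn : 0 < n) (h : (ℕ → Fin n) → ℝ) : ℝ :=
  (∑ σ : Fin k → Fin n, h (fun i => if hi : i < k then σ ⟨i, hi⟩ else ⟨0, hn⟩)) / (n : ℝ) ^ k

variable {E : Type*} [NormedAddCommGroup E] [InnerProductSpace ℝ E] [CompleteSpace E]

theorem image_add_le_of_lipschitzWith_gradient {f : E → ℝ} {f' : E → E} {K : NNReal}
    (hgrad : ∀ v, HasGradientAt f (f' v) v) (hlip : LipschitzWith K f') (x v : E) :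
    f (x + v) ≤ f x + ⟪f' x, v⟫ + K / 2 * ‖v‖ ^ 2 := by
  set ψ : ℝ → ℝ := fun t => f (x + t • v) - t * ⟪f' x, v⟫ - K / 2 * t ^ 2 * ‖v‖ ^ 2
  have hψ : ∀ t, HasDerivAt ψ (⟪f' (x + t • v), v⟫ - ⟪f' x, v⟫ - K * t * ‖v‖ ^ 2) t := by
    intro t
    have hline : HasDerivAt (fun t : ℝ => x + t • v) v t := by
      simpa using ((hasDerivAt_id t).smul_const v).const_add x
    have hf : HasDerivAt (fun t : ℝ => f (x + t • v)) ⟪f' (x + t • v), v⟫ t :=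
      ((hgrad (x + t • v)).hasFDerivAt.comp_hasDerivAt t hline :)
    refine ((hf.sub ((hasDerivAt_id t).mul_const ⟪f' x, v⟫)).sub
      (((hasDerivAt_pow 2 t).const_mul (K / 2 : ℝ)).mul_const (‖v‖ ^ 2))).congr_deriv ?_
    push_cast
    ring
  have hψ_nonpos : ∀ t ∈ interior (Set.Ici (0 : ℝ)),
      ⟪f' (x + t • v), v⟫ - ⟪f' x, v⟫ - K * t * ‖v‖ ^ 2 ≤ 0 := by
    intro t ht
    rw [interior_Ici] at ht
    have hdist : ‖f' (x + t • v) - f' x‖ ≤ K * (t * ‖v‖) := by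
      simpa [dist_eq_norm, norm_smul, abs_of_pos (Set.mem_Ioi.1 ht)] using
        hlip.dist_le_mul (x + t • v) x
    have hcs := real_inner_le_norm (f' (x + t • v) - f' x) v
    rw [inner_sub_left] at hcs
    nlinarith [mul_le_mul_of_nonneg_right hdist (norm_nonneg v)]
  have hanti : AntitoneOn ψ (Set.Ici 0) :=
    antitoneOn_of_hasDerivWithinAt_nonpos (convex_Ici 0)
      (fun t _ => (hψ t).continuousAt.continuousWithinAt)
      (fun t _ => (hψ t).hasDerivWithinAt) hψ_nonpos
  have h01 := hanti Set.self_mem_Ici (Set.mem_Ici.2 zero_le_one) zero_le_one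
  norm_num [ψ] at h01
  linarith

theorem average_image_sub_smul_le {n : ℕ} (hn : 0 < n) {f : E → ℝ} {f' : E → E} {K : NNReal}
    (hgrad : ∀ v, HasGradientAt f (f' v) v) (hlip : LipschitzWith K f') (G : Fin n → E) (w : E)
    (hunbiased : (1 / (n : ℝ)) • ∑ z, G z = f' w) (η : ℝ) :
    (1 / (n : ℝ)) * ∑ z, f (w - η • G z)
      ≤ f w - η * ‖f' w‖ ^ 2 + K / 2 * η ^ 2 * ((1 / (n : ℝ)) * ∑ z, ‖G z‖ ^ 2) := by
  have hdescent : ∀ z,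
      f (w - η • G z) ≤ f w - η * ⟪f' w, G z⟫ + K / 2 * η ^ 2 * ‖G z‖ ^ 2 := by
    intro z
    have := image_add_le_of_lipschitzWith_gradient hgrad hlip w (-(η • G z))
    rw [← sub_eq_add_neg, inner_neg_right, real_inner_smul_right, norm_neg, norm_smul,
      Real.norm_eq_abs, mul_pow, sq_abs] at this
    linarith
  have hmean : (1 / (n : ℝ)) * ∑ z, ⟪f' w, G z⟫ = ‖f' w‖ ^ 2 := by
    rw [← inner_sum, ← real_inner_smul_right, hunbiased, real_inner_self_eq_norm_sq]
  calc (1 / (n : ℝ)) * ∑ z, f (w - η • G z)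
      ≤ (1 / (n : ℝ)) * ∑ z, (f w - η * ⟪f' w, G z⟫ + K / 2 * η ^ 2 * ‖G z‖ ^ 2) := by
        gcongr with z
        exact hdescent z
    _ = f w - η * ((1 / (n : ℝ)) * ∑ z, ⟪f' w, G z⟫)
          + K / 2 * η ^ 2 * ((1 / (n : ℝ)) * ∑ z, ‖G z‖ ^ 2) := by
        rw [sum_add_distrib, sum_sub_distrib, sum_const, card_univ, Fintype.card_fin,
          ← mul_sum, ← mul_sum, nsmul_eq_mul]
        field_simp
    _ = f w - η * ‖f' w‖ ^ 2 + K / 2 * η ^ 2 * ((1 / (n : ℝ)) * ∑ z, ‖G z‖ ^ 2) := by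
        rw [hmean]

theorem average_sgd_step_sub_le {n : ℕ} (hn : 0 < n) {f : E → ℝ} {f' : E → E}
    {ρ L μ fstar : ℝ} (hL : 0 < L) (hρ : 0 < ρ)
    (hgrad : ∀ v, HasGradientAt f (f' v) v) (hlip : LipschitzWith (Real.toNNReal L) f')
    (G : Fin n → E) (w : E) (hpl : ‖f' w‖ ^ 2 ≥ 2 * μ * (f w - fstar))
    (hunbiased : (1 / (n : ℝ)) • ∑ z, G z = f' w)
    (hsgc : (1 / (n : ℝ)) * ∑ z, ‖G z‖ ^ 2 ≤ ρ * ‖f' w‖ ^ 2) :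
    (1 / (n : ℝ)) * ∑ z, f (w - (1 / (ρ * L)) • G z) - fstar
      ≤ (1 - μ / (ρ * L)) * (f w - fstar) := by
  set η := 1 / (ρ * L)
  have hη : 0 < η := by positivity
  have hdescent := average_image_sub_smul_le hn hgrad hlip G w hunbiased η
  rw [Real.coe_toNNReal L hL.le] at hdescent
  have hnoise : L / 2 * η ^ 2 * ((1 / (n : ℝ)) * ∑ z, ‖G z‖ ^ 2) ≤ η / 2 * ‖f' w‖ ^ 2 :=
    calc L / 2 * η ^ 2 * ((1 / (n : ℝ)) * ∑ z, ‖G z‖ ^ 2)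
        ≤ L / 2 * η ^ 2 * (ρ * ‖f' w‖ ^ 2) := by gcongr
      _ = η / 2 * ‖f' w‖ ^ 2 := by simp only [η]; field_simp
  have hrate : μ / (ρ * L) = μ * η := by simp only [η]; field_simp
  rw [hrate]
  nlinarith [mul_le_mul_of_nonneg_left hpl hη.le]

section ExpN

variable {n k : ℕ} (hn : 0 < n)

theorem ExpN_mono {h g : (ℕ → Fin n) → ℝ} (hhg : ∀ ω, h ω ≤ g ω) :
    ExpN n k hn h ≤ ExpN n k hn g := by
  unfold ExpN
  gcongr with σ
  exact hhg _

theorem ExpN_mul_add (h : (ℕ → Fin n) → ℝ) (a b : ℝ) :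
    ExpN n k hn (fun ω => a * h ω + b) = a * ExpN n k hn h + b := by
  simp only [ExpN, sum_add_distrib, ← mul_sum, sum_const, card_univ, Fintype.card_fun,
    Fintype.card_fin, nsmul_eq_mul, Nat.cast_pow]
  field_simp

theorem ExpN_const (b : ℝ) : ExpN n k hn (fun _ => b) = b := by
  simpa using ExpN_mul_add hn (fun _ => 0) 0 b

theorem ExpN_succ (h : (ℕ → Fin n) → ℝ) :
    ExpN n (k + 1) hn h =
      ExpN n k hn (fun ω => (1 / (n : ℝ)) * ∑ z, h (Function.update ω k z)) := by
  have hext : ∀ (σ : Fin k → Fin n) (z : Fin n),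
      (fun i => if hi : i < k + 1 then (Fin.snoc σ z : Fin (k + 1) → Fin n) ⟨i, hi⟩ else ⟨0, hn⟩)
        = Function.update (fun i => if hi : i < k then σ ⟨i, hi⟩ else ⟨0, hn⟩) k z := by
    intro σ z
    funext i
    rcases lt_trichotomy i k with hik | rfl | hik
    · simp [hik, Function.update_of_ne hik.ne, Nat.lt_succ_of_lt hik, Fin.snoc]
    · simp [Fin.snoc]
    · simp [hik.not_gt, Function.update_of_ne hik.ne', (Nat.succ_le_of_lt hik).not_gt]
  unfold ExpN
  rw [← (Fin.snocEquiv fun _ => Fin n).sum_comp, Fintype.sum_prod_type, sum_comm]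
  simp only [Fin.snocEquiv_apply, hext]
  rw [pow_succ, ← mul_sum]
  field_simp

end ExpN

theorem recursion_update_eq_of_le {α X : Type*} {W : (ℕ → α) → ℕ → X} {T : X → α → X} {w0 : X}
    (hW0 : ∀ ω, W ω 0 = w0) (hWs : ∀ ω k, W ω (k + 1) = T (W ω k) (ω k))
    (ω : ℕ → α) (k : ℕ) (z : α) : ∀ j ≤ k, W (Function.update ω k z) j = W ω j := by
  intro j hj
  induction j with
  | zero => rw [hW0, hW0]
  | succ j ih => rw [hWs, hWs, ih (by omega), Function.update_of_ne (by omega)]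

theorem ExpN_recursion_succ {X : Type*} {n : ℕ} (hn : 0 < n) {W : (ℕ → Fin n) → ℕ → X}
    {T : X → Fin n → X} {w0 : X} (hW0 : ∀ ω, W ω 0 = w0)
    (hWs : ∀ ω k, W ω (k + 1) = T (W ω k) (ω k)) (φ : X → ℝ) (k : ℕ) :
    ExpN n (k + 1) hn (fun ω => φ (W ω (k + 1)))
      = ExpN n k hn (fun ω => (1 / (n : ℝ)) * ∑ z, φ (T (W ω k) z)) := by
  rw [ExpN_succ]
  congr! with ω z
  rw [hWs, recursion_update_eq_of_le hW0 hWs ω k z k le_rfl, Function.update_self]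

/-- No sign condition on `r` is needed: for `r < 0` nonnegativity forces `u = 0`. -/
theorem le_geom_of_nonneg {u : ℕ → ℝ} {r : ℝ} (hu : ∀ k, 0 ≤ u k)
    (h : ∀ k, u (k + 1) ≤ r * u k) (k : ℕ) : u k ≤ r ^ k * u 0 := by
  rcases le_or_gt 0 r with hr | hr
  · exact le_geom hr k fun j _ => h j
  have hu0 : u 0 = 0 := by nlinarith [h 0, hu 0, hu 1]
  cases k with
  | zero => simp
  | succ k => rw [hu0, mul_zero]; nlinarith [h k, hu k]

theorem sgd_linear_rate_pl_sgc_general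
    (d n : ℕ) (hn : 0 < n)
    (f : EuclideanSpace ℝ (Fin d) → ℝ)
    (f' : EuclideanSpace ℝ (Fin d) → EuclideanSpace ℝ (Fin d))
    (G : EuclideanSpace ℝ (Fin d) → Fin n → EuclideanSpace ℝ (Fin d))
    (ρ L μ fstar η : ℝ) (w0 : EuclideanSpace ℝ (Fin d))
    (W : (ℕ → Fin n) → ℕ → EuclideanSpace ℝ (Fin d))
    (hL : 0 < L) (hρ : 1 ≤ ρ)
    (hgrad : ∀ v, HasGradientAt f (f' v) v)
    (hlip : LipschitzWith (Real.toNNReal L) f')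
    (hbelow : ∀ v, fstar ≤ f v)
    (hpl : ∀ v, ‖f' v‖ ^ 2 ≥ 2 * μ * (f v - fstar))
    (hunbiased : ∀ v, (1 / (n : ℝ)) • ∑ z, G v z = f' v)
    (hsgc : ∀ v, (1 / (n : ℝ)) * ∑ z, ‖G v z‖ ^ 2 ≤ ρ * ‖f' v‖ ^ 2)
    (hη : η = 1 / (ρ * L))
    (hW0 : ∀ ω, W ω 0 = w0)
    (hWs : ∀ ω k, W ω (k + 1) = W ω k - η • G (W ω k) (ω k)) :
    ∀ k : ℕ, ExpN n (k + 1) hn (fun ω => f (W ω (k + 1))) - fstar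
      ≤ (1 - μ / (ρ * L)) ^ (k + 1) * (f w0 - fstar) := by
  subst hη
  set r := 1 - μ / (ρ * L)
  set e : ℕ → ℝ := fun k => ExpN n k hn (fun ω => f (W ω k)) - fstar
  have hstep : ∀ w,
      (1 / (n : ℝ)) * ∑ z, f (w - (1 / (ρ * L)) • G w z) ≤ r * f w + (1 - r) * fstar := by
    intro w
    have := average_sgd_step_sub_le hn hL (by linarith) hgrad hlip (G w) w (hpl w)
      (hunbiased w) (hsgc w)
    linarith
  have he_nonneg : ∀ k, 0 ≤ e k := fun k =>
    sub_nonneg.2 <| (ExpN_const hn fstar).symm.le.trans (ExpN_mono hn fun ω => hbelow _)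
  have he_succ : ∀ k, e (k + 1) ≤ r * e k := by
    intro k
    have hmarkov := ExpN_recursion_succ hn (T := fun w z => w - (1 / (ρ * L)) • G w z)
      hW0 hWs f k
    have hcontract := (ExpN_mono (k := k) hn fun ω => hstep (W ω k)).trans_eq
      (ExpN_mul_add hn _ r ((1 - r) * fstar))
    linarith
  have he_zero : e 0 = f w0 - fstar := by simp only [e, hW0, ExpN_const]
  intro k
  simpa only [he_zero] using le_geom_of_nonneg he_nonneg he_succ (k + 1)

/-- Linear convergence of constant step-size SGD under the PL
inequality and the strong growth condition:
`E[f(w_{k+1}) − f*] ≤ (1 − μ/(ρL))^{k+1} (f(w₀) − f*)`. -/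
theorem sgd_linear_rate_pl_sgc
    (d n : ℕ) (hn : 0 < n)
    (f : EuclideanSpace ℝ (Fin d) → ℝ)
    (f' : EuclideanSpace ℝ (Fin d) → EuclideanSpace ℝ (Fin d))
    (G : EuclideanSpace ℝ (Fin d) → Fin n → EuclideanSpace ℝ (Fin d))
    (ρ L μ fstar η : ℝ) (w0 : EuclideanSpace ℝ (Fin d))
    (W : (ℕ → Fin n) → ℕ → EuclideanSpace ℝ (Fin d))
    (hL : 0 < L) (hρ : 1 ≤ ρ) (hμ : 0 < μ)
    (hgrad : ∀ v, HasGradientAt f (f' v) v)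
    (hlip : LipschitzWith (Real.toNNReal L) f')
    (hbelow : ∀ v, fstar ≤ f v)
    (hattained : ∃ v, f v = fstar)
    (hpl : ∀ v, ‖f' v‖ ^ 2 ≥ 2 * μ * (f v - fstar))
    (hunbiased : ∀ v, (1 / (n : ℝ)) • ∑ z, G v z = f' v)
    (hsgc : ∀ v, (1 / (n : ℝ)) * ∑ z, ‖G v z‖ ^ 2 ≤ ρ * ‖f' v‖ ^ 2)
    (hη : η = 1 / (ρ * L))
    (hW0 : ∀ ω, W ω 0 = w0)
    (hWs : ∀ ω k, W ω (k + 1) = W ω k - η • G (W ω k) (ω k)) :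
    ∀ k : ℕ, ExpN n (k + 1) hn (fun ω => f (W ω (k + 1))) - fstar
      ≤ (1 - μ / (ρ * L)) ^ (k + 1) * (f w0 - fstar) :=
  sgd_linear_rate_pl_sgc_general d n hn f f' G ρ L μ fstar η w0 W hL hρ hgrad hlip hbelow hpl
    hunbiased hsgc hη hW0 hWs
end

section
/- (One-step contraction under WGC and strong convexity) If f is μ-strongly convex with minimizer w* and the stochastic gradients satisfy E_z[∇f(w,z)] = ∇f(w) and E_z‖∇f(w,z)‖² ≤ 2ρL[f(w) − f(w*)], then for w' = w − η∇f(w,z) with η = 1/(ρL): E‖w' − w*‖² ≤ (1 − μ/(ρL))‖w − w*‖². -/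
open scoped RealInnerProductSpace
open Finset

/-- One-step contraction under the weak growth condition and
strong convexity: `E‖w' − w*‖² ≤ (1 − μ/(ρL))‖w − w*‖²` for `η = 1/(ρL)`. -/
theorem sgd_one_step_contraction_wgc
    (d n : ℕ) (hn : 0 < n)
    (f : EuclideanSpace ℝ (Fin d) → ℝ)
    (f' : EuclideanSpace ℝ (Fin d) → EuclideanSpace ℝ (Fin d))
    (G : EuclideanSpace ℝ (Fin d) → Fin n → EuclideanSpace ℝ (Fin d))
    (ρ L μ η : ℝ) (w wstar : EuclideanSpace ℝ (Fin d))
    (hL : 0 < L) (hρ : 1 ≤ ρ) (hμ : 0 < μ)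
    (hgrad : ∀ v, HasGradientAt f (f' v) v)
    (hsc : ∀ v u, f v ≥ f u + ⟪f' u, v - u⟫ + (μ / 2) * ‖v - u‖ ^ 2)
    (hmin : ∀ v, f wstar ≤ f v)
    (hunbiased : ∀ v, (1 / (n : ℝ)) • ∑ z, G v z = f' v)
    (hwgc : ∀ v, (1 / (n : ℝ)) * ∑ z, ‖G v z‖ ^ 2 ≤ 2 * ρ * L * (f v - f wstar))
    (hη : η = 1 / (ρ * L)) :
    (1 / (n : ℝ)) * ∑ z, ‖(w - η • G w z) - wstar‖ ^ 2
      ≤ (1 - μ / (ρ * L)) * ‖w - wstar‖ ^ 2 := by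
  set a := w - wstar with ha
  have hρL : 0 < ρ * L := mul_pos (lt_of_lt_of_le one_pos hρ) hL
  have hηpos : 0 < η := by rw [hη]; positivity
  have hηρL : η * (ρ * L) = 1 := by rw [hη]; field_simp
  have hn' : (0:ℝ) < (n:ℝ) := by exact_mod_cast hn
  have key : ∀ z, ‖(w - η • G w z) - wstar‖ ^ 2
      = ‖a‖ ^ 2 - 2 * η * ⟪a, G w z⟫ + η ^ 2 * ‖G w z‖ ^ 2 := by
    intro z
    have h1 : (w - η • G w z) - wstar = a - η • G w z := by rw [ha]; abel
    rw [h1, norm_sub_sq_real, real_inner_smul_right, norm_smul]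
    simp [mul_pow, sq_abs]
    ring
  have hsum : (1 / (n : ℝ)) * ∑ z, ‖(w - η • G w z) - wstar‖ ^ 2
      = ‖a‖ ^ 2 - 2 * η * ⟪a, f' w⟫
        + η ^ 2 * ((1 / (n : ℝ)) * ∑ z, ‖G w z‖ ^ 2) := by
    have h2 : ⟪a, f' w⟫ = (1 / (n : ℝ)) * ∑ z, ⟪a, G w z⟫ := by
      rw [← hunbiased w, real_inner_smul_right, inner_sum]
    rw [h2]
    simp only [key]
    rw [Finset.sum_add_distrib, Finset.sum_sub_distrib, Finset.sum_const,
      ← Finset.mul_sum, ← Finset.mul_sum]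
    simp [Finset.card_univ]
    field_simp
  have hscw : ⟪f' w, a⟫ ≥ f w - f wstar + (μ / 2) * ‖a‖ ^ 2 := by
    have := hsc wstar w
    have hws : wstar - w = -a := by rw [ha]; abel
    rw [hws, inner_neg_right, norm_neg] at this
    linarith
  have hinner : ⟪a, f' w⟫ = ⟪f' w, a⟫ := real_inner_comm _ _
  have hD : 0 ≤ f w - f wstar := by linarith [hmin w]
  have hS := hwgc w
  rw [hsum, hinner]
  have hη2 : η ^ 2 * (2 * ρ * L * (f w - f wstar)) = 2 * η * (f w - f wstar) := by
    have : η ^ 2 * (2 * ρ * L) = 2 * η := by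
      have : η * (ρ * L) = 1 := hηρL
      nlinarith
    nlinarith
  have hmuη : μ / (ρ * L) = η * μ := by rw [hη]; field_simp
  rw [hmuη]
  nlinarith [sq_nonneg η, mul_le_mul_of_nonneg_left hS (sq_nonneg η)]
end

section
/- If γ₀ = 0 and γ_k = (1/ρ + √(1/ρ² + 4γ_{k−1}²))/2 for k ≥ 1 (the positive root of γ² − γ/ρ − γ_{k−1}² = 0), then γ_k ≥ k/(2ρ) for all k ≥ 0. -/
/-- For the recursion `γ₀ = 0`,
`γ_k = (1/ρ + √(1/ρ² + 4γ_{k−1}²))/2`, one has `γ_k ≥ k/(2ρ)` for all `k`. -/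
theorem gamma_recursion_lower_bound
    (ρ : ℝ) (hρ : 0 < ρ) (γ : ℕ → ℝ)
    (h0 : γ 0 = 0)
    (hrec : ∀ k : ℕ, γ (k + 1) = (1 / ρ + Real.sqrt (1 / ρ ^ 2 + 4 * (γ k) ^ 2)) / 2) :
    ∀ k : ℕ, (k : ℝ) / (2 * ρ) ≤ γ k := by
  intro k
  induction k with
  | zero => simp [h0]
  | succ n ih =>
    have hγn : 0 ≤ γ n := le_trans (by positivity) ih
    have hs : 2 * γ n ≤ Real.sqrt (1 / ρ ^ 2 + 4 * (γ n) ^ 2) := by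
      have : (2 * γ n) ^ 2 ≤ 1 / ρ ^ 2 + 4 * (γ n) ^ 2 := by
        have : (0:ℝ) ≤ 1 / ρ ^ 2 := by positivity
        nlinarith
      calc 2 * γ n = Real.sqrt ((2 * γ n) ^ 2) := by
            rw [Real.sqrt_sq (by positivity)]
        _ ≤ _ := Real.sqrt_le_sqrt this
    rw [hrec n]
    push_cast
    have h1 : (1:ℝ) / (2 * ρ) + n / (2 * ρ) ≤ (1 / ρ + 2 * γ n) / 2 := by
      have e : (1 / ρ + 2 * γ n) / 2 = 1 / (2 * ρ) + γ n := by
        field_simp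
      rw [e]
      linarith [ih]
    calc ((n:ℝ) + 1) / (2 * ρ) = 1 / (2 * ρ) + n / (2 * ρ) := by ring
      _ ≤ (1 / ρ + 2 * γ n) / 2 := h1
      _ ≤ _ := by linarith
end

section
/- (Perceptron mistake bound via convex WGC rate) For linearly separable data with margin τ, ‖x‖ = 1 for all points, squared-hinge loss f(w) = E[(1 − yxᵀw)₊²], and starting from w₀ = 0, SGD with step-size η = 1/4 satisfies the mistake bound P(y xᵀ w̄_k ≤ 0) ≤ 8/(τ² k), where w̄_k is the averaged iterate. -/
open scoped RealInnerProductSpace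
open Finset

section AuxPerceptron

variable {d : ℕ}

/-- one-step distance decrease for squared-hinge SGD with `η = 1/4`. -/
private lemma percep_step_dist (u wstar w : EuclideanSpace ℝ (Fin d)) (e : ℝ)
    (hu : ‖u‖ = 1) (he : e = 1 ∨ e = -1) (hmar : 1 ≤ e * ⟪u, wstar⟫) :
    ‖(w + ((1/4 : ℝ) * (2 * max (1 - e * ⟪u, w⟫) 0) * e) • u) - wstar‖^2
      ≤ ‖w - wstar‖^2 - (3/4) * (max (1 - e * ⟪u, w⟫) 0)^2 := by
  set t : ℝ := 1 - e * ⟪u, w⟫ with ht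
  set h : ℝ := max t 0 with hh
  have hh0 : 0 ≤ h := le_max_right _ _
  have hht : h * t = h^2 := by
    rcases le_or_gt t 0 with h1 | h1
    · have : h = 0 := max_eq_right h1
      simp [this]
    · have : h = t := max_eq_left h1.le
      rw [this]; ring
  have he2 : e^2 = 1 := by rcases he with rfl | rfl <;> norm_num
  set s : ℝ := (1/4 : ℝ) * (2 * h) * e with hs
  have key : ‖(w - wstar) + s • u‖^2 = ‖w - wstar‖^2 + 2 * (s * ⟪u, w - wstar⟫) + s^2 := by
    rw [norm_add_sq_real, real_inner_smul_right, norm_smul, hu, mul_one,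
      Real.norm_eq_abs, real_inner_comm (w - wstar) u]
    rw [sq_abs]
  have e1 : (w + s • u) - wstar = (w - wstar) + s • u := by abel
  rw [e1, key]
  have hin : ⟪u, w - wstar⟫ = ⟪u, w⟫ - ⟪u, wstar⟫ := inner_sub_right _ _ _
  have hew : e * ⟪u, w⟫ = 1 - t := by rw [ht]; ring
  have hb : h * (e * ⟪u, wstar⟫) ≥ h := by
    calc h = h * 1 := (mul_one h).symm
    _ ≤ h * (e * ⟪u, wstar⟫) := by exact mul_le_mul_of_nonneg_left hmar hh0
  have hs2 : s^2 = h^2 / 4 := by rw [hs]; rw [mul_pow, mul_pow, he2]; ring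
  have h2s : 2 * (s * ⟪u, w - wstar⟫) = h * (e * ⟪u,w⟫) - h * (e * ⟪u,wstar⟫) := by
    rw [hs, hin]; ring
  nlinarith [hb, hht, hh0]

/-- hinge growth under one step. -/
private lemma percep_step_hinge (u u' w : EuclideanSpace ℝ (Fin d)) (e e' : ℝ)
    (hu : ‖u‖ = 1) (hu' : ‖u'‖ = 1) (he : e = 1 ∨ e = -1) (he' : e' = 1 ∨ e' = -1) :
    max (1 - e' * ⟪u', w + ((1/4 : ℝ) * (2 * max (1 - e * ⟪u, w⟫) 0) * e) • u⟫) 0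
      ≤ max (1 - e' * ⟪u', w⟫) 0 + (max (1 - e * ⟪u, w⟫) 0) / 2 := by
  set h : ℝ := max (1 - e * ⟪u, w⟫) 0 with hh
  have hh0 : 0 ≤ h := le_max_right _ _
  set s : ℝ := (1/4 : ℝ) * (2 * h) * e with hs
  have hse : |s| ≤ h / 2 := by
    rw [hs, abs_mul, abs_mul]
    have : |e| = 1 := by rcases he with rfl | rfl <;> norm_num
    rw [this, abs_of_nonneg (by positivity : (0:ℝ) ≤ 2*h)]
    rw [abs_of_nonneg (by norm_num : (0:ℝ) ≤ (1/4:ℝ))]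
    nlinarith
  have hcs : |⟪u', u⟫| ≤ 1 := by
    have := abs_real_inner_le_norm u' u
    rwa [hu, hu', mul_one] at this
  have he'1 : |e'| = 1 := by rcases he' with rfl | rfl <;> norm_num
  have hiexp : ⟪u', w + s • u⟫ = ⟪u', w⟫ + s * ⟪u', u⟫ := by
    rw [inner_add_right, real_inner_smul_right]
  rw [hiexp]
  have hbound : |e' * (s * ⟪u', u⟫)| ≤ h / 2 := by
    rw [abs_mul, he'1, one_mul, abs_mul]
    calc |s| * |⟪u', u⟫| ≤ (h/2) * 1 := by
          apply mul_le_mul hse hcs (abs_nonneg _) (by positivity)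
      _ = h/2 := mul_one _
  have h1 : 1 - e' * (⟪u', w⟫ + s * ⟪u', u⟫) ≤ (1 - e' * ⟪u', w⟫) + h/2 := by
    have := (abs_le.mp hbound).1
    nlinarith [this]
  apply max_le
  · calc 1 - e' * (⟪u', w⟫ + s * ⟪u', u⟫) ≤ (1 - e' * ⟪u', w⟫) + h/2 := h1
      _ ≤ max (1 - e' * ⟪u', w⟫) 0 + h/2 := by
          have := le_max_left (1 - e' * ⟪u', w⟫) 0
          linarith
  · positivity

/-- independence: summing a function of the `jf`-th coordinate against a quantity not
depending on the `jf`-th coordinate. -/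
private lemma percep_indep_sum {α : Type*} {m k : ℕ} (hm : 0 < m) (jf : Fin k)
    (g : Fin m → α → ℝ) (V : (Fin k → Fin m) → α)
    (hV : ∀ σ v, V (Function.update σ jf v) = V σ) :
    (m : ℝ) * ∑ σ : Fin k → Fin m, g (σ jf) (V σ)
      = ∑ σ : Fin k → Fin m, ∑ i : Fin m, g i (V σ) := by
  classical
  let e := Equiv.piSplitAt jf (fun _ : Fin k => Fin m)
  have h1 : ∀ F : (Fin k → Fin m) → ℝ,
      ∑ σ : Fin k → Fin m, F σ = ∑ p : Fin m × ({j : Fin k // j ≠ jf} → Fin m), F (e.symm p) :=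
    fun F => (Equiv.sum_comp e.symm F).symm
  have happ : ∀ (v : Fin m) (ρ : {j : Fin k // j ≠ jf} → Fin m),
      e.symm (v, ρ) = Function.update (e.symm (⟨0, hm⟩, ρ)) jf v := by
    intro v ρ
    funext a
    by_cases ha : a = jf
    · subst ha
      simp [e, Equiv.piSplitAt, Function.update_self]
    · simp [e, Equiv.piSplitAt, ha, Function.update_of_ne ha]
  have hVeq : ∀ (v : Fin m) (ρ : {j : Fin k // j ≠ jf} → Fin m),
      V (e.symm (v, ρ)) = V (e.symm (⟨0, hm⟩, ρ)) := by
    intro v ρ; rw [happ, hV]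
  have hcoord : ∀ (v : Fin m) (ρ : {j : Fin k // j ≠ jf} → Fin m),
      (e.symm (v, ρ)) jf = v := by
    intro v ρ; simp [e, Equiv.piSplitAt]
  rw [h1 (fun σ => g (σ jf) (V σ)), h1 (fun σ => ∑ i, g i (V σ))]
  rw [Fintype.sum_prod_type, Fintype.sum_prod_type]
  simp only [hcoord, hVeq]
  rw [Finset.sum_const, card_univ, Fintype.card_fin, nsmul_eq_mul]
  congr 1
  exact Finset.sum_comm

end AuxPerceptron

set_option maxHeartbeats 2000000 in
/-- Perceptron mistake bound via the convex WGC rate: for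
linearly separable data with margin `τ` and unit-norm features, SGD on the
squared-hinge loss with `η = 1/4` started at `w₀ = 0` satisfies
`P(y xᵀ w̄_k ≤ 0) ≤ 8/(τ² k)`. -/
theorem perceptron_mistake_bound
    (d m : ℕ) (hm : 0 < m)
    (x : Fin m → EuclideanSpace ℝ (Fin d)) (y : Fin m → ℝ)
    (τ : ℝ) (hτ : 0 < τ)
    (wstar : EuclideanSpace ℝ (Fin d))
    (hy : ∀ i, y i = 1 ∨ y i = -1)
    (hx : ∀ i, ‖x i‖ = 1)
    (hwstar : ‖wstar‖ = 1 / τ)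
    (hmargin : ∀ i, 1 ≤ y i * ⟪x i, wstar⟫)
    (W : (ℕ → Fin m) → ℕ → EuclideanSpace ℝ (Fin d))
    (hW0 : ∀ ω, W ω 0 = 0)
    (hWs : ∀ ω k, W ω (k + 1) = W ω k +
      ((1 / 4 : ℝ) * (2 * max (1 - y (ω k) * ⟪x (ω k), W ω k⟫) 0) * y (ω k)) • x (ω k)) :
    ∀ k : ℕ, 0 < k →
      ExpN m k hm (fun ω =>
          (1 / (m : ℝ)) * ∑ i, if y i * ⟪x i, (1 / (k : ℝ)) • ∑ j ∈ Finset.Icc 1 k, W ω j⟫ ≤ 0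
            then (1 : ℝ) else 0)
        ≤ 8 / (τ ^ 2 * k) := by
  intro k hk
  classical
  have hm' : (0:ℝ) < (m:ℝ) := by exact_mod_cast hm
  have hk' : (0:ℝ) < (k:ℝ) := by exact_mod_cast hk
  -- abbreviations
  set L : Fin m → EuclideanSpace ℝ (Fin d) → ℝ :=
    fun i w => (max (1 - y i * ⟪x i, w⟫) 0)^2 with hLdef
  set F : EuclideanSpace ℝ (Fin d) → ℝ := fun w => (1/(m:ℝ)) * ∑ i, L i w with hFdef
  set P : (Fin k → Fin m) → ℕ → Fin m :=
    fun σ i => if hi : i < k then σ ⟨i, hi⟩ else ⟨0, hm⟩ with hPdef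
  have hP : ∀ (σ : Fin k → Fin m) (i : ℕ) (hi : i < k), P σ i = σ ⟨i, hi⟩ :=
    fun σ i hi => dif_pos hi
  have hL0 : ∀ i w, 0 ≤ L i w := fun i w => sq_nonneg _
  have hF0 : ∀ w, 0 ≤ F w := by
    intro w
    apply mul_nonneg (by positivity)
    exact Finset.sum_nonneg fun i _ => hL0 i w
  -- one-step distance decrease along actual trajectory
  have hstep : ∀ (ω : ℕ → Fin m) (j : ℕ),
      ‖W ω (j+1) - wstar‖^2 ≤ ‖W ω j - wstar‖^2 - (3/4) * L (ω j) (W ω j) := by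
    intro ω j
    rw [hWs]
    exact percep_step_dist (x (ω j)) wstar (W ω j) (y (ω j)) (hx _) (hy _) (hmargin _)
  -- trajectory depends only on past noise
  have hWdep : ∀ (j : ℕ) (ω ω' : ℕ → Fin m), (∀ i, i < j → ω i = ω' i) → W ω j = W ω' j := by
    intro j
    induction j with
    | zero => intro ω ω' _; rw [hW0, hW0]
    | succ n ih =>
      intro ω ω' hcon
      have h1 : W ω n = W ω' n := ih ω ω' (fun i hi => hcon i (Nat.lt_succ_of_lt hi))
      have h2 : ω n = ω' n := hcon n (Nat.lt_succ_self n)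
      rw [hWs, hWs, h1, h2]
  -- telescoped bound on sampled losses
  have teles : ∀ (ω : ℕ → Fin m) (n : ℕ),
      ∑ j ∈ range n, L (ω j) (W ω j) ≤ (4/3) * (1/τ^2) := by
    intro ω n
    have key : ∀ n, (3/4) * ∑ j ∈ range n, L (ω j) (W ω j)
        ≤ ‖W ω 0 - wstar‖^2 - ‖W ω n - wstar‖^2 := by
      intro n
      induction n with
      | zero => simp
      | succ n ih =>
        rw [Finset.sum_range_succ, mul_add]
        have := hstep ω n
        linarith
    have h0 : ‖W ω 0 - wstar‖^2 = 1/τ^2 := by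
      rw [hW0, zero_sub, norm_neg, hwstar]
      field_simp
    have := key n
    have hn2 : (0:ℝ) ≤ ‖W ω n - wstar‖^2 := sq_nonneg _
    rw [h0] at this
    linarith
  -- one-step growth of the full loss
  have growth : ∀ (ω : ℕ → Fin m) (j : ℕ),
      F (W ω (j+1)) ≤ 2 * F (W ω j) + (1/2) * L (ω j) (W ω j) := by
    intro ω j
    have hterm : ∀ i, L i (W ω (j+1)) ≤ 2 * L i (W ω j) + (1/2) * L (ω j) (W ω j) := by
      intro i
      have hb := percep_step_hinge (x (ω j)) (x i) (W ω j) (y (ω j)) (y i)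
        (hx _) (hx _) (hy _) (hy _)
      rw [← hWs] at hb
      set a := max (1 - y i * ⟪x i, W ω (j+1)⟫) 0 with ha
      set b := max (1 - y i * ⟪x i, W ω j⟫) 0 with hbd
      set c := max (1 - y (ω j) * ⟪x (ω j), W ω j⟫) 0 with hc
      have h1 : (0:ℝ) ≤ a := le_max_right _ _
      have h2 : (0:ℝ) ≤ b := le_max_right _ _
      have h3 : (0:ℝ) ≤ c := le_max_right _ _
      have hb2 : a^2 ≤ (b + c/2)^2 := by
        apply pow_le_pow_left₀ h1 hb
      simp only [hLdef]
      nlinarith [hb2, sq_nonneg (b - c/2)]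
    have hsum : ∑ i, L i (W ω (j+1))
        ≤ 2 * (∑ i, L i (W ω j)) + (m:ℝ) * ((1/2) * L (ω j) (W ω j)) := by
      calc ∑ i, L i (W ω (j+1))
          ≤ ∑ i : Fin m, (2 * L i (W ω j) + (1/2) * L (ω j) (W ω j)) :=
            Finset.sum_le_sum (fun i _ => hterm i)
        _ = 2 * (∑ i, L i (W ω j)) + (m:ℝ) * ((1/2) * L (ω j) (W ω j)) := by
            rw [Finset.sum_add_distrib, ← Finset.mul_sum, Finset.sum_const, card_univ,
              Fintype.card_fin, nsmul_eq_mul]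
    show (1/(m:ℝ)) * ∑ i, L i (W ω (j+1))
        ≤ 2 * ((1/(m:ℝ)) * ∑ i, L i (W ω j)) + (1/2) * L (ω j) (W ω j)
    have := mul_le_mul_of_nonneg_left hsum (le_of_lt (by positivity : (0:ℝ) < 1/(m:ℝ)))
    calc (1/(m:ℝ)) * ∑ i, L i (W ω (j+1))
        ≤ (1/(m:ℝ)) * (2 * (∑ i, L i (W ω j)) + (m:ℝ) * ((1/2) * L (ω j) (W ω j))) := this
      _ = 2 * ((1/(m:ℝ)) * ∑ i, L i (W ω j)) + (1/2) * L (ω j) (W ω j) := by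
          field_simp <;> ring
  -- Jensen for the averaged iterate
  have hcard : ((Icc 1 k).card : ℝ) = (k:ℝ) := by
    rw [Nat.card_Icc]; norm_num
  have jensen : ∀ (ω : ℕ → Fin m),
      F ((1/(k:ℝ)) • ∑ j ∈ Icc 1 k, W ω j) ≤ (1/(k:ℝ)) * ∑ j ∈ Icc 1 k, F (W ω j) := by
    intro ω
    set wbar := (1/(k:ℝ)) • ∑ j ∈ Icc 1 k, W ω j with hwbar
    have hterm : ∀ i, L i wbar ≤ (1/(k:ℝ)) * ∑ j ∈ Icc 1 k, L i (W ω j) := by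
      intro i
      have hip : ⟪x i, wbar⟫ = (1/(k:ℝ)) * ∑ j ∈ Icc 1 k, ⟪x i, W ω j⟫ := by
        rw [hwbar, real_inner_smul_right, inner_sum]
      have ht : 1 - y i * ⟪x i, wbar⟫
          = (1/(k:ℝ)) * ∑ j ∈ Icc 1 k, (1 - y i * ⟪x i, W ω j⟫) := by
        rw [hip, Finset.sum_sub_distrib, Finset.sum_const, nsmul_eq_mul, hcard,
          ← Finset.mul_sum]
        field_simp <;> ring
      have hmax : max (1 - y i * ⟪x i, wbar⟫) 0
          ≤ (1/(k:ℝ)) * ∑ j ∈ Icc 1 k, max (1 - y i * ⟪x i, W ω j⟫) 0 := by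
        have hrhs : (0:ℝ) ≤ (1/(k:ℝ)) * ∑ j ∈ Icc 1 k, max (1 - y i * ⟪x i, W ω j⟫) 0 := by
          apply mul_nonneg (by positivity)
          exact Finset.sum_nonneg fun j _ => le_max_right _ _
        apply max_le _ hrhs
        rw [ht]
        apply mul_le_mul_of_nonneg_left _ (by positivity : (0:ℝ) ≤ 1/(k:ℝ))
        exact Finset.sum_le_sum fun j _ => le_max_left _ _
      have hsq : L i wbar ≤ ((1/(k:ℝ)) * ∑ j ∈ Icc 1 k, max (1 - y i * ⟪x i, W ω j⟫) 0)^2 := by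
        simp only [hLdef]
        apply pow_le_pow_left₀ (le_max_right _ _) hmax
      have hcs : (∑ j ∈ Icc 1 k, max (1 - y i * ⟪x i, W ω j⟫) 0)^2
          ≤ (k:ℝ) * ∑ j ∈ Icc 1 k, (max (1 - y i * ⟪x i, W ω j⟫) 0)^2 := by
        have := sq_sum_le_card_mul_sum_sq (s := Icc 1 k)
          (f := fun j => max (1 - y i * ⟪x i, W ω j⟫) 0)
        rwa [hcard] at this
      calc L i wbar ≤ ((1/(k:ℝ)) * ∑ j ∈ Icc 1 k, max (1 - y i * ⟪x i, W ω j⟫) 0)^2 := hsq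
        _ = (1/(k:ℝ))^2 * (∑ j ∈ Icc 1 k, max (1 - y i * ⟪x i, W ω j⟫) 0)^2 := by ring
        _ ≤ (1/(k:ℝ))^2 * ((k:ℝ) * ∑ j ∈ Icc 1 k, (max (1 - y i * ⟪x i, W ω j⟫) 0)^2) := by
            apply mul_le_mul_of_nonneg_left hcs (by positivity)
        _ = (1/(k:ℝ)) * ∑ j ∈ Icc 1 k, L i (W ω j) := by
            simp only [hLdef]
            field_simp
    show (1/(m:ℝ)) * ∑ i, L i wbar ≤ (1/(k:ℝ)) * ∑ j ∈ Icc 1 k, F (W ω j)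
    calc (1/(m:ℝ)) * ∑ i, L i wbar
        ≤ (1/(m:ℝ)) * ∑ i : Fin m, (1/(k:ℝ)) * ∑ j ∈ Icc 1 k, L i (W ω j) := by
          apply mul_le_mul_of_nonneg_left _ (by positivity : (0:ℝ) ≤ 1/(m:ℝ))
          exact Finset.sum_le_sum fun i _ => hterm i
      _ = (1/(k:ℝ)) * ∑ j ∈ Icc 1 k, F (W ω j) := by
          simp only [hFdef, Finset.mul_sum]
          rw [Finset.sum_comm]
          apply Finset.sum_congr rfl
          intro j _
          apply Finset.sum_congr rfl
          intro i _
          ring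
  -- indicator bound
  have indic : ∀ (ω : ℕ → Fin m),
      (1/(m:ℝ)) * ∑ i, (if y i * ⟪x i, (1/(k:ℝ)) • ∑ j ∈ Icc 1 k, W ω j⟫ ≤ 0
        then (1:ℝ) else 0) ≤ F ((1/(k:ℝ)) • ∑ j ∈ Icc 1 k, W ω j) := by
    intro ω
    set wbar := (1/(k:ℝ)) • ∑ j ∈ Icc 1 k, W ω j with hwbar
    show (1/(m:ℝ)) * ∑ i, (if y i * ⟪x i, wbar⟫ ≤ 0 then (1:ℝ) else 0)
      ≤ (1/(m:ℝ)) * ∑ i, L i wbar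
    apply mul_le_mul_of_nonneg_left _ (by positivity : (0:ℝ) ≤ 1/(m:ℝ))
    apply Finset.sum_le_sum
    intro i _
    split_ifs with hc
    · have h1 : (1:ℝ) ≤ 1 - y i * ⟪x i, wbar⟫ := by linarith
      have h2 : (1:ℝ) ≤ max (1 - y i * ⟪x i, wbar⟫) 0 := le_trans h1 (le_max_left _ _)
      simp only [hLdef]
      nlinarith
    · exact hL0 i wbar
  -- the independence identity
  have hind : ∀ jf : Fin k,
      (m:ℝ) * ∑ σ : Fin k → Fin m, L (P σ jf.val) (W (P σ) jf.val)
        = ∑ σ : Fin k → Fin m, ∑ i, L i (W (P σ) jf.val) := by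
    intro jf
    have hrw : ∀ σ : Fin k → Fin m, P σ jf.val = σ jf := by
      intro σ
      rw [hP σ jf.val jf.isLt]
    have hupd : ∀ (σ : Fin k → Fin m) (v : Fin m),
        W (P (Function.update σ jf v)) jf.val = W (P σ) jf.val := by
      intro σ v
      apply hWdep
      intro i hi
      have hik : i < k := lt_trans hi jf.isLt
      rw [hP _ i hik, hP _ i hik]
      apply Function.update_of_ne
      intro hcon
      rw [Fin.ext_iff] at hcon
      simp at hcon
      omega
    have := percep_indep_sum (α := EuclideanSpace ℝ (Fin d)) hm jf L
      (fun σ => W (P σ) jf.val) hupd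
    calc (m:ℝ) * ∑ σ : Fin k → Fin m, L (P σ jf.val) (W (P σ) jf.val)
        = (m:ℝ) * ∑ σ : Fin k → Fin m, L (σ jf) (W (P σ) jf.val) := by
          congr 1
          exact Finset.sum_congr rfl fun σ _ => by rw [hrw]
      _ = ∑ σ : Fin k → Fin m, ∑ i, L i (W (P σ) jf.val) := this
  -- S j : expected full loss at iterate j
  set S : ℕ → ℝ := fun j => ∑ σ : Fin k → Fin m, F (W (P σ) j) with hSdef
  have hSsample : ∀ jf : Fin k,
      S jf.val = ∑ σ : Fin k → Fin m, L (P σ jf.val) (W (P σ) jf.val) := by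
    intro jf
    have h1 := hind jf
    simp only [hSdef, hFdef]
    rw [← Finset.mul_sum, ← h1]
    field_simp
  have hS0 : ∀ j, 0 ≤ S j := by
    intro j
    exact Finset.sum_nonneg fun σ _ => hF0 _
  have hcardfun : (Fintype.card (Fin k → Fin m) : ℝ) = (m:ℝ)^k := by
    rw [Fintype.card_fun, Fintype.card_fin, Fintype.card_fin]
    push_cast
    rfl
  -- total sampled loss bound
  have htot : ∑ σ : Fin k → Fin m, ∑ j ∈ range k, L (P σ j) (W (P σ) j)
      ≤ (m:ℝ)^k * ((4/3) * (1/τ^2)) := by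
    calc ∑ σ : Fin k → Fin m, ∑ j ∈ range k, L (P σ j) (W (P σ) j)
        ≤ ∑ _σ : Fin k → Fin m, (4/3) * (1/τ^2) :=
          Finset.sum_le_sum fun σ _ => teles (P σ) k
      _ = (m:ℝ)^k * ((4/3) * (1/τ^2)) := by
          rw [Finset.sum_const, card_univ, nsmul_eq_mul, hcardfun]
  -- sampled loss bound for one index
  have hsingle : ∀ jf : Fin k,
      ∑ σ : Fin k → Fin m, L (P σ jf.val) (W (P σ) jf.val) ≤ (m:ℝ)^k * ((4/3) * (1/τ^2)) := by
    intro jf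
    calc ∑ σ : Fin k → Fin m, L (P σ jf.val) (W (P σ) jf.val)
        ≤ ∑ σ : Fin k → Fin m, ∑ j ∈ range k, L (P σ j) (W (P σ) j) := by
          apply Finset.sum_le_sum
          intro σ _
          apply Finset.single_le_sum (f := fun j => L (P σ j) (W (P σ) j))
            (fun j _ => hL0 _ _)
          rw [Finset.mem_range]
          exact jf.isLt
      _ ≤ (m:ℝ)^k * ((4/3) * (1/τ^2)) := htot
  -- sum over range k of S
  have hrangeS : ∑ j ∈ range k, S j ≤ (m:ℝ)^k * ((4/3) * (1/τ^2)) := by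
    rw [← Fin.sum_univ_eq_sum_range]
    calc ∑ jf : Fin k, S jf.val
        = ∑ jf : Fin k, ∑ σ : Fin k → Fin m, L (P σ jf.val) (W (P σ) jf.val) :=
          Finset.sum_congr rfl fun jf _ => hSsample jf
      _ = ∑ σ : Fin k → Fin m, ∑ jf : Fin k, L (P σ jf.val) (W (P σ) jf.val) :=
          Finset.sum_comm
      _ = ∑ σ : Fin k → Fin m, ∑ j ∈ range k, L (P σ j) (W (P σ) j) := by
          apply Finset.sum_congr rfl
          intro σ _
          rw [← Fin.sum_univ_eq_sum_range]
      _ ≤ (m:ℝ)^k * ((4/3) * (1/τ^2)) := htot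
  -- bound on S k via growth
  obtain ⟨K1, rfl⟩ : ∃ K1, k = K1 + 1 := ⟨k - 1, by omega⟩
  have hK1 : K1 < K1 + 1 := Nat.lt_succ_self K1
  have hSlast : S (K1 + 1) ≤ (5/2) * S K1 := by
    have hgs : S (K1 + 1) ≤ 2 * S K1
        + (1/2) * ∑ σ : Fin (K1+1) → Fin m, L (P σ K1) (W (P σ) K1) := by
      simp only [hSdef]
      rw [Finset.mul_sum, Finset.mul_sum, ← Finset.sum_add_distrib]
      apply Finset.sum_le_sum
      intro σ _
      have := growth (P σ) K1
      have hPev : P σ K1 = (P σ) K1 := rfl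
      calc F (W (P σ) (K1 + 1)) ≤ 2 * F (W (P σ) K1) + (1/2) * L ((P σ) K1) (W (P σ) K1) :=
            growth (P σ) K1
        _ = 2 * F (W (P σ) K1) + (1/2) * L (P σ K1) (W (P σ) K1) := rfl
    have hsamp : ∑ σ : Fin (K1+1) → Fin m, L (P σ K1) (W (P σ) K1) = S K1 := by
      have := hSsample ⟨K1, hK1⟩
      exact this.symm
    rw [hsamp] at hgs
    linarith
  have hSK1 : S K1 ≤ (m:ℝ)^(K1+1) * ((4/3) * (1/τ^2)) := by
    have := hSsample ⟨K1, hK1⟩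
    rw [this]
    exact hsingle ⟨K1, hK1⟩
  -- total over Icc 1 k
  have hIcc : ∑ j ∈ Icc 1 (K1+1), S j ≤ (m:ℝ)^(K1+1) * ((14/3) * (1/τ^2)) := by
    have hsplit : ∑ j ∈ Icc 1 (K1+1), S j = ∑ j ∈ Icc 1 K1, S j + S (K1+1) := by
      rw [← Finset.sum_Icc_succ_top]
      omega
    have hsub : ∑ j ∈ Icc 1 K1, S j ≤ ∑ j ∈ range (K1+1), S j := by
      apply Finset.sum_le_sum_of_subset_of_nonneg
      · intro j hj
        rw [Finset.mem_Icc] at hj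
        rw [Finset.mem_range]
        omega
      · intro j _ _
        exact hS0 j
    have h1 : ∑ j ∈ Icc 1 K1, S j ≤ (m:ℝ)^(K1+1) * ((4/3) * (1/τ^2)) :=
      le_trans hsub hrangeS
    have h2 : S (K1+1) ≤ (5/2) * ((m:ℝ)^(K1+1) * ((4/3) * (1/τ^2))) := by
      calc S (K1+1) ≤ (5/2) * S K1 := hSlast
        _ ≤ (5/2) * ((m:ℝ)^(K1+1) * ((4/3) * (1/τ^2))) := by
            apply mul_le_mul_of_nonneg_left hSK1 (by norm_num)
    rw [hsplit]
    nlinarith [h1, h2]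
  -- final assembly
  have hfinal : ∑ σ : Fin (K1+1) → Fin m,
      (1/(m:ℝ)) * ∑ i, (if y i * ⟪x i, (1/((K1+1:ℕ):ℝ)) • ∑ j ∈ Icc 1 (K1+1), W (P σ) j⟫ ≤ 0
        then (1:ℝ) else 0)
      ≤ (1/((K1+1:ℕ):ℝ)) * ((m:ℝ)^(K1+1) * ((14/3) * (1/τ^2))) := by
    calc ∑ σ : Fin (K1+1) → Fin m,
        (1/(m:ℝ)) * ∑ i, (if y i * ⟪x i, (1/((K1+1:ℕ):ℝ)) • ∑ j ∈ Icc 1 (K1+1), W (P σ) j⟫ ≤ 0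
          then (1:ℝ) else 0)
        ≤ ∑ σ : Fin (K1+1) → Fin m, (1/((K1+1:ℕ):ℝ)) * ∑ j ∈ Icc 1 (K1+1), F (W (P σ) j) := by
          apply Finset.sum_le_sum
          intro σ _
          exact le_trans (indic (P σ)) (jensen (P σ))
      _ = (1/((K1+1:ℕ):ℝ)) * ∑ j ∈ Icc 1 (K1+1), S j := by
          rw [← Finset.mul_sum]
          congr 1
          rw [Finset.sum_comm]
      _ ≤ (1/((K1+1:ℕ):ℝ)) * ((m:ℝ)^(K1+1) * ((14/3) * (1/τ^2))) := by
          apply mul_le_mul_of_nonneg_left hIcc (by positivity)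
  -- conclude
  have hExp : ExpN m (K1+1) hm (fun ω =>
      (1 / (m : ℝ)) * ∑ i, if y i * ⟪x i, (1 / ((K1+1:ℕ) : ℝ)) • ∑ j ∈ Finset.Icc 1 (K1+1), W ω j⟫ ≤ 0
        then (1 : ℝ) else 0)
      = (∑ σ : Fin (K1+1) → Fin m,
          (1/(m:ℝ)) * ∑ i, (if y i * ⟪x i, (1/((K1+1:ℕ):ℝ)) • ∑ j ∈ Icc 1 (K1+1), W (P σ) j⟫ ≤ 0
            then (1:ℝ) else 0)) / (m:ℝ)^(K1+1) := rfl
  rw [hExp]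
  rw [div_le_iff₀ (by positivity)]
  calc (∑ σ : Fin (K1+1) → Fin m,
      (1/(m:ℝ)) * ∑ i, (if y i * ⟪x i, (1/((K1+1:ℕ):ℝ)) • ∑ j ∈ Icc 1 (K1+1), W (P σ) j⟫ ≤ 0
        then (1:ℝ) else 0))
      ≤ (1/((K1+1:ℕ):ℝ)) * ((m:ℝ)^(K1+1) * ((14/3) * (1/τ^2))) := hfinal
    _ ≤ 8 / (τ^2 * ((K1+1:ℕ):ℝ)) * (m:ℝ)^(K1+1) := by
        have h1 : (0:ℝ) < τ^2 * ((K1+1:ℕ):ℝ) := by positivity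
        have hM : (0:ℝ) ≤ (m:ℝ)^(K1+1) := by positivity
        rw [div_mul_eq_mul_div (8:ℝ) (τ^2*((K1+1:ℕ):ℝ)) ((m:ℝ)^(K1+1)), le_div_iff₀ h1]
        have heq : (1/((K1+1:ℕ):ℝ)) * ((m:ℝ)^(K1+1) * ((14/3) * (1/τ^2)))
            * (τ^2*((K1+1:ℕ):ℝ)) = (14/3) * (m:ℝ)^(K1+1) := by
          field_simp
        rw [heq]
        nlinarith [hM]
end

section
/- (Additive-noise non-convex bound) If f is L-smooth, bounded below by f*, and its unbiased stochastic gradients satisfy E_z‖∇f(w,z)‖² ≤ ρ‖∇f(w)‖² + σ², then for SGD with constant step-size η ≤ 1/(ρL) run for t iterations: min_{k<t} E‖∇f(w_k)‖² ≤ (2/(ηt))[f(w₀) − f*] + Lησ². -/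
/-!
By the descent lemma for an `L`-smooth `f`, unbiasedness and the strong growth condition, one SGD
step from a fixed point `w` decreases `f` on average over the noise by at least
`η/2 ‖∇f(w)‖² - Lη²σ²/2` as soon as `ηρL ≤ 1`. Since `w_k` depends only on the first `k` noise
values, averaging over `k + 1` noise values is averaging over the last one inside the average over
the first `k`, so the same decrease holds for `E f(w_k)`. Telescoping over `k < t` and using
`f ≥ f*` bounds `∑_{k<t} E‖∇f(w_k)‖²`, and the smallest term is at most the mean.
-/

open scoped RealInnerProductSpace
open Finset

open scoped NNReal

section Smooth

variable {E : Type*} [NormedAddCommGroup E] [InnerProductSpace ℝ E]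

theorem LipschitzWith.inner_sub_le {g : E → E} {K : ℝ≥0} (hg : LipschitzWith K g) (x v : E)
    {s : ℝ} (hs : 0 ≤ s) : ⟪g (x + s • v) - g x, v⟫ ≤ K * s * ‖v‖ ^ 2 :=
  calc ⟪g (x + s • v) - g x, v⟫ ≤ ‖g (x + s • v) - g x‖ * ‖v‖ := real_inner_le_norm _ _
    _ ≤ K * ‖x + s • v - x‖ * ‖v‖ := by gcongr; exact hg.norm_sub_le _ _
    _ = K * s * ‖v‖ ^ 2 := by
      rw [add_sub_cancel_left, norm_smul, Real.norm_of_nonneg hs]; ring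

theorem le_add_inner_add_sq_of_lipschitz_gradient [CompleteSpace E] {f : E → ℝ} {f' : E → E}
    {K : ℝ≥0} (hgrad : ∀ v, HasGradientAt f (f' v) v) (hlip : LipschitzWith K f') (x y : E) :
    f y ≤ f x + ⟪f' x, y - x⟫ + K / 2 * ‖y - x‖ ^ 2 := by
  set v := y - x
  -- `φ 0 = f x`, `φ 1` is `f y` minus the quadratic model, and `φ' ≤ 0` on `[0, 1]`.
  set φ : ℝ → ℝ := fun s => f (x + s • v) - s * ⟪f' x, v⟫ - K * s ^ 2 / 2 * ‖v‖ ^ 2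
  have hφ' : ∀ s, HasDerivAt φ (⟪f' (x + s • v) - f' x, v⟫ - K * s * ‖v‖ ^ 2) s := by
    intro s
    have hline : HasDerivAt (fun s : ℝ => x + s • v) v s := by
      simpa using ((hasDerivAt_id s).smul_const v).const_add x
    have hf := (hgrad (x + s • v)).hasFDerivAt.comp_hasDerivAt s hline
    have hq := ((hasDerivAt_pow 2 s).const_mul (K : ℝ)).div_const 2 |>.mul_const (‖v‖ ^ 2)
    refine ((hf.sub ((hasDerivAt_id s).mul_const ⟪f' x, v⟫)).sub hq).congr_deriv ?_
    simp only [InnerProductSpace.toDual_apply_apply, inner_sub_left]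
    ring
  have hanti : AntitoneOn φ (Set.Icc 0 1) := by
    refine antitoneOn_of_hasDerivWithinAt_nonpos (convex_Icc 0 1)
      (fun s _ => (hφ' s).continuousAt.continuousWithinAt)
      (fun s _ => (hφ' s).hasDerivWithinAt) fun s hs => ?_
    rw [interior_Icc] at hs
    linarith [hlip.inner_sub_le x v hs.1.le]
  have h01 := hanti (by simp) (by simp) zero_le_one
  simp only [φ, zero_smul, add_zero, one_smul, zero_mul, sub_zero, one_pow, mul_one, v,
    add_sub_cancel] at h01
  ring_nf at h01 ⊢
  linarith

theorem mean_le_sub_add_of_strong_growth [CompleteSpace E] {ι : Type*} [Fintype ι] [Nonempty ι]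
    {f : E → ℝ} {f' : E → E} {K : ℝ≥0} (hgrad : ∀ v, HasGradientAt f (f' v) v)
    (hlip : LipschitzWith K f') {w : E} {g : ι → E} {ρ σ η : ℝ}
    (hunbiased : (1 / (Fintype.card ι : ℝ)) • ∑ z, g z = f' w)
    (hsgc : (1 / (Fintype.card ι : ℝ)) * ∑ z, ‖g z‖ ^ 2 ≤ ρ * ‖f' w‖ ^ 2 + σ ^ 2)
    (hη : 0 ≤ η) (hηρK : η * ρ * K ≤ 1) :
    (1 / (Fintype.card ι : ℝ)) * ∑ z, f (w - η • g z)
      ≤ f w - η / 2 * ‖f' w‖ ^ 2 + K * η ^ 2 * σ ^ 2 / 2 := by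
  set N : ℝ := (Fintype.card ι : ℝ) with hN_def
  have hN : N ≠ 0 := Nat.cast_ne_zero.2 Fintype.card_ne_zero
  have hstep : ∀ z, f (w - η • g z) ≤ f w - η * ⟪f' w, g z⟫ + K * η ^ 2 / 2 * ‖g z‖ ^ 2 := by
    intro z
    have h := le_add_inner_add_sq_of_lipschitz_gradient hgrad hlip w (w - η • g z)
    rwa [sub_sub_cancel_left, inner_neg_right, norm_neg, real_inner_smul_right, norm_smul,
      Real.norm_of_nonneg hη, mul_pow, ← sub_eq_add_neg, ← mul_assoc, div_mul_eq_mul_div] at h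
  have hmean_inner : 1 / N * ∑ z, ⟪f' w, g z⟫ = ‖f' w‖ ^ 2 := by
    rw [← inner_sum, ← real_inner_smul_right, hunbiased, real_inner_self_eq_norm_sq]
  calc 1 / N * ∑ z, f (w - η • g z)
      ≤ 1 / N * ∑ z, (f w - η * ⟪f' w, g z⟫ + K * η ^ 2 / 2 * ‖g z‖ ^ 2) := by
        gcongr with z; exact hstep z
    _ = f w - η * (1 / N * ∑ z, ⟪f' w, g z⟫) + K * η ^ 2 / 2 * (1 / N * ∑ z, ‖g z‖ ^ 2) := by
        simp only [sum_add_distrib, sum_sub_distrib, ← mul_sum, sum_const, card_univ,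
          nsmul_eq_mul, ← hN_def]
        field_simp
    _ ≤ f w - η * ‖f' w‖ ^ 2 + K * η ^ 2 / 2 * (ρ * ‖f' w‖ ^ 2 + σ ^ 2) := by
        rw [hmean_inner]; gcongr
    _ ≤ f w - η / 2 * ‖f' w‖ ^ 2 + K * η ^ 2 * σ ^ 2 / 2 := by
        have := mul_le_mul_of_nonneg_left hηρK (mul_nonneg hη (sq_nonneg ‖f' w‖))
        nlinarith

end Smooth

theorem sum_pi_fin_succ_eq_sum_snoc {β : Type*} [Fintype β] {k : ℕ} (F : (Fin (k + 1) → β) → ℝ) :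
    ∑ σ, F σ = ∑ τ : Fin k → β, ∑ z, F (Fin.snoc τ z) := by
  rw [← (Fin.snocEquiv fun _ => β).sum_comp, Fintype.sum_prod_type, sum_comm]
  rfl

section ExpN

variable {n k : ℕ} {hn : 0 < n}

theorem expN_add (g h : (ℕ → Fin n) → ℝ) :
    ExpN n k hn (fun ω => g ω + h ω) = ExpN n k hn g + ExpN n k hn h := by
  simp only [ExpN, sum_add_distrib, add_div]

theorem expN_sub (g h : (ℕ → Fin n) → ℝ) :
    ExpN n k hn (fun ω => g ω - h ω) = ExpN n k hn g - ExpN n k hn h := by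
  simp only [ExpN, sum_sub_distrib, sub_div]

theorem expN_const_mul (c : ℝ) (h : (ℕ → Fin n) → ℝ) :
    ExpN n k hn (fun ω => c * h ω) = c * ExpN n k hn h := by
  simp only [ExpN, ← mul_sum, mul_div_assoc]

theorem expN_const (c : ℝ) : ExpN n k hn (fun _ => c) = c := by
  have : (n : ℝ) ^ k ≠ 0 := pow_ne_zero _ (Nat.cast_ne_zero.2 hn.ne')
  simp [ExpN, this]

theorem expN_mono {g h : (ℕ → Fin n) → ℝ} (hgh : ∀ ω, g ω ≤ h ω) :
    ExpN n k hn g ≤ ExpN n k hn h := by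
  unfold ExpN
  gcongr with σ
  exact hgh _

theorem expN_succ (h : (ℕ → Fin n) → ℝ) :
    ExpN n (k + 1) hn h
      = ExpN n k hn (fun ω => 1 / (n : ℝ) * ∑ z, h (Function.update ω k z)) := by
  have hpad : ∀ (τ : Fin k → Fin n) (z : Fin n),
      (fun i => if hi : i < k + 1 then (Fin.snoc τ z : Fin (k + 1) → Fin n) ⟨i, hi⟩ else ⟨0, hn⟩)
        = Function.update (fun i => if hi : i < k then τ ⟨i, hi⟩ else ⟨0, hn⟩) k z := by
    intro τ z
    funext i
    rcases lt_trichotomy i k with hik | rfl | hki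
    · simp [Fin.snoc, hik, hik.trans (Nat.lt_succ_self k), hik.ne]
    · simp [Fin.snoc]
    · simp [hki.ne', show ¬ i < k + 1 by omega, show ¬ i < k by omega]
  simp only [ExpN, sum_pi_fin_succ_eq_sum_snoc, hpad, ← mul_sum, pow_succ]
  field_simp

end ExpN

theorem exists_lt_le_of_le_sub_mul_add {a b : ℕ → ℝ} {c C m : ℝ} (hc : 0 < c)
    (hstep : ∀ k, a (k + 1) ≤ a k - c * b k + C) (hm : ∀ k, m ≤ a k) {t : ℕ} (ht : 0 < t) :
    ∃ k < t, b k ≤ (a 0 - m) / (c * t) + C / c := by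
  have htelescope : ∀ t : ℕ, c * ∑ k ∈ range t, b k ≤ a 0 - a t + t * C := by
    intro t
    induction t with
    | zero => simp
    | succ t ih =>
      rw [sum_range_succ, mul_add]
      push_cast
      linarith [hstep t]
  have hsum : ∑ k ∈ range t, b k ≤ ∑ _k ∈ range t, ((a 0 - m) / (c * t) + C / c) := by
    have ht' : (0 : ℝ) < t := Nat.cast_pos.2 ht
    have hmean : (t : ℝ) * ((a 0 - m) / (c * t) + C / c) = (a 0 - m + t * C) / c := by
      field_simp
    rw [sum_const, card_range, nsmul_eq_mul, hmean, le_div_iff₀ hc]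
    linarith [htelescope t, hm t]
  obtain ⟨k, hk, hbk⟩ := exists_le_of_sum_le (nonempty_range_iff.2 ht.ne') hsum
  exact ⟨k, mem_range.1 hk, hbk⟩

section SGD

variable {α E : Type*} [AddCommGroup E] [Module ℝ E] {η : ℝ} {w0 : E}

theorem sgd_iterate_congr {G : E → α → E} {W : (ℕ → α) → ℕ → E} (hW0 : ∀ ω, W ω 0 = w0)
    (hWs : ∀ ω k, W ω (k + 1) = W ω k - η • G (W ω k) (ω k)) {ω ω' : ℕ → α} :
    ∀ {k}, (∀ i < k, ω i = ω' i) → W ω k = W ω' k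
  | 0, _ => by rw [hW0, hW0]
  | k + 1, h => by
    rw [hWs, hWs, sgd_iterate_congr hW0 hWs fun i hi => h i (hi.trans k.lt_succ_self),
      h k k.lt_succ_self]

theorem sgd_iterate_update_succ {G : E → α → E} {W : (ℕ → α) → ℕ → E} (hW0 : ∀ ω, W ω 0 = w0)
    (hWs : ∀ ω k, W ω (k + 1) = W ω k - η • G (W ω k) (ω k)) (ω : ℕ → α) (k : ℕ) (z : α) :
    W (Function.update ω k z) (k + 1) = W ω k - η • G (W ω k) z := by
  rw [hWs, Function.update_self,
    sgd_iterate_congr hW0 hWs fun i hi => Function.update_of_ne hi.ne _ _]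

theorem expN_sgd_succ_le {n : ℕ} {hn : 0 < n} {G : E → Fin n → E} {W : (ℕ → Fin n) → ℕ → E}
    (hW0 : ∀ ω, W ω 0 = w0) (hWs : ∀ ω k, W ω (k + 1) = W ω k - η • G (W ω k) (ω k))
    {F H : E → ℝ} (hFH : ∀ w, 1 / (n : ℝ) * ∑ z, F (w - η • G w z) ≤ H w) (k : ℕ) :
    ExpN n (k + 1) hn (fun ω => F (W ω (k + 1))) ≤ ExpN n k hn (fun ω => H (W ω k)) := by
  rw [expN_succ]
  refine expN_mono fun ω => ?_
  simp only [sgd_iterate_update_succ hW0 hWs]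
  exact hFH _

end SGD

/-- Non-convex SGD bound under the strong growth condition with
additive noise: for `η ≤ 1/(ρL)` and `t` iterations,
`min_{k<t} E‖∇f(w_k)‖² ≤ (2/(ηt))(f(w₀) − f*) + Lησ²`. -/
theorem sgd_nonconvex_rate_sgc_additive
    (d n : ℕ) (hn : 0 < n)
    (f : EuclideanSpace ℝ (Fin d) → ℝ)
    (f' : EuclideanSpace ℝ (Fin d) → EuclideanSpace ℝ (Fin d))
    (G : EuclideanSpace ℝ (Fin d) → Fin n → EuclideanSpace ℝ (Fin d))
    (ρ L σ fstar η : ℝ) (w0 : EuclideanSpace ℝ (Fin d))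
    (W : (ℕ → Fin n) → ℕ → EuclideanSpace ℝ (Fin d))
    (hL : 0 < L) (hρ : 0 < ρ)
    (hgrad : ∀ v, HasGradientAt f (f' v) v)
    (hlip : LipschitzWith (Real.toNNReal L) f')
    (hbelow : ∀ v, fstar ≤ f v)
    (hunbiased : ∀ v, (1 / (n : ℝ)) • ∑ z, G v z = f' v)
    (hsgc : ∀ v, (1 / (n : ℝ)) * ∑ z, ‖G v z‖ ^ 2 ≤ ρ * ‖f' v‖ ^ 2 + σ ^ 2)
    (hη : 0 < η) (hη' : η ≤ 1 / (ρ * L))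
    (hW0 : ∀ ω, W ω 0 = w0)
    (hWs : ∀ ω k, W ω (k + 1) = W ω k - η • G (W ω k) (ω k))
    (t : ℕ) (ht : 0 < t) :
    ∃ k < t, ExpN n k hn (fun ω => ‖f' (W ω k)‖ ^ 2)
      ≤ (2 / (η * t)) * (f w0 - fstar) + L * η * σ ^ 2 := by
  have : Nonempty (Fin n) := ⟨⟨0, hn⟩⟩
  have hK : (L.toNNReal : ℝ) = L := Real.coe_toNNReal L hL.le
  have hηρL : η * ρ * L.toNNReal ≤ 1 := by
    rwa [hK, mul_assoc, ← le_div_iff₀ (by positivity)]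
  have hdescent (w) : 1 / (n : ℝ) * ∑ z, f (w - η • G w z)
      ≤ f w - η / 2 * ‖f' w‖ ^ 2 + L * η ^ 2 * σ ^ 2 / 2 := by
    simpa [hK] using mean_le_sub_add_of_strong_growth hgrad hlip (g := G w)
      (by rw [Fintype.card_fin]; exact hunbiased w) (by rw [Fintype.card_fin]; exact hsgc w)
      hη.le hηρL
  set a : ℕ → ℝ := fun k => ExpN n k hn fun ω => f (W ω k)
  have hstep (k) : a (k + 1) ≤ a k - η / 2 * ExpN n k hn (fun ω => ‖f' (W ω k)‖ ^ 2)
      + L * η ^ 2 * σ ^ 2 / 2 := by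
    refine (expN_sgd_succ_le hW0 hWs hdescent k).trans_eq ?_
    rw [expN_add, expN_sub, expN_const_mul, expN_const]
  have ha_below (k) : fstar ≤ a k :=
    (expN_const fstar).symm.le.trans (expN_mono fun ω => hbelow (W ω k))
  obtain ⟨k, hk, hbk⟩ := exists_lt_le_of_le_sub_mul_add (by positivity) hstep ha_below ht
  refine ⟨k, hk, hbk.trans_eq ?_⟩
  simp only [a, hW0, expN_const]
  field_simp
end
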